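/- arXiv:2512.22885 — 14 statements merged into one kernel-verified Lean document; each statement's English description precedes it below -/
import Mathlib

section
/- For each integer m ≥ 1 and R ∈ (0, π), define ξ_m(R) = m² (tan(R/2))^{2m} / ( sin R · ∫₀^R (tan(r/2))^{2m} sin r dr ). Then the function R ↦ ξ_m(R) · R³ is strictly increasing on (0, π). -/
open Real Set

private lemma aux_mul_cos_lt_sin {x : ℝ} (hx : 0 < x) (hx' : x < π) :
    x * Real.cos x < Real.sin x := by
  rcases lt_or_ge x (π/2) with h | h
  · have hc : 0 < Real.cos x := Real.cos_pos_of_mem_Ioo ⟨by linarith, h⟩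
    have ht := Real.lt_tan hx h
    rw [Real.tan_eq_sin_div_cos] at ht
    exact (lt_div_iff₀ hc).1 ht
  · have hs : 0 < Real.sin x := Real.sin_pos_of_pos_of_lt_pi hx hx'
    have hc : Real.cos x ≤ 0 :=
      Real.cos_nonpos_of_pi_div_two_le_of_le h (by nlinarith [Real.pi_pos])
    nlinarith

private lemma aux_cot_lt_inv {x : ℝ} (hx : 0 < x) (hx' : x < π) :
    Real.cos x / Real.sin x < 1 / x := by
  have hs : 0 < Real.sin x := Real.sin_pos_of_pos_of_lt_pi hx hx'
  rw [div_lt_div_iff₀ hs hx]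
  nlinarith [aux_mul_cos_lt_sin hx hx']

private lemma aux_sin_mul_ge {s R : ℝ} (hs : 0 ≤ s) (hs1 : s ≤ 1) (hR : 0 ≤ R)
    (hR' : R ≤ π) : s * Real.sin R ≤ Real.sin (s * R) := by
  have h := strictConcaveOn_sin_Icc.concaveOn.2
    (⟨le_rfl, Real.pi_pos.le⟩ : (0:ℝ) ∈ Icc 0 π) (⟨hR, hR'⟩ : R ∈ Icc 0 π)
    (by linarith : (0:ℝ) ≤ 1 - s) hs (by ring)
  simpa using h

/-- derivative of `R ↦ log (tan (c*R/2))` -/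
private lemma aux_deriv_log_tan {c R : ℝ} (hc : 0 < c) (hc1 : c ≤ 1)
    (hR : 0 < R) (hR' : R < π) :
    HasDerivAt (fun R : ℝ => Real.log (Real.tan (c * R / 2))) (c / Real.sin (c * R)) R := by
  have hcR : 0 < c * R := mul_pos hc hR
  have hcR' : c * R < π := lt_of_le_of_lt (by nlinarith) hR'
  have h0 : 0 < c * R / 2 := by linarith
  have h2 : c * R / 2 < π / 2 := by linarith
  have hcos : Real.cos (c * R / 2) ≠ 0 :=
    (Real.cos_pos_of_mem_Ioo ⟨by linarith, h2⟩).ne'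
  have hsin : 0 < Real.sin (c * R / 2) := Real.sin_pos_of_pos_of_lt_pi h0 (by linarith [Real.pi_pos])
  have htan : Real.tan (c * R / 2) ≠ 0 :=
    (Real.tan_pos_of_pos_of_lt_pi_div_two h0 h2).ne'
  have h1 : HasDerivAt (fun R : ℝ => c * R / 2) (c / 2) R := by
    simpa using ((hasDerivAt_id R).const_mul c).div_const 2
  have hT : HasDerivAt (fun R : ℝ => Real.tan (c * R / 2))
      (1 / Real.cos (c * R / 2) ^ 2 * (c / 2)) R :=
    by have := (Real.hasDerivAt_tan hcos).comp R h1; exact this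
  have hL := hT.log htan
  convert hL using 1
  rw [Real.tan_eq_sin_div_cos]
  have hsin2 : Real.sin (c * R) = 2 * Real.sin (c * R / 2) * Real.cos (c * R / 2) := by
    rw [← Real.sin_two_mul]
    congr 1
    ring
  rw [hsin2]
  field_simp

private lemma aux_deriv_log_sin {c R : ℝ} (hc : 0 < c) (hc1 : c ≤ 1)
    (hR : 0 < R) (hR' : R < π) :
    HasDerivAt (fun R : ℝ => Real.log (Real.sin (c * R)))
      (c * Real.cos (c * R) / Real.sin (c * R)) R := by
  have hcR : 0 < c * R := mul_pos hc hR
  have hcR' : c * R < π := lt_of_le_of_lt (by nlinarith) hR'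
  have hsin : Real.sin (c * R) ≠ 0 := (Real.sin_pos_of_pos_of_lt_pi hcR hcR').ne'
  have h1 : HasDerivAt (fun R : ℝ => c * R) c R := by
    simpa using (hasDerivAt_id R).const_mul c
  have hS : HasDerivAt (fun R : ℝ => Real.sin (c * R)) (Real.cos (c * R) * c) R := h1.sin
  have := hS.log hsin
  convert this using 1
  ring

/-- the logarithm of `g(s, ·)` -/
private noncomputable def ell (m : ℕ) (s : ℝ) (R : ℝ) : ℝ :=
  2 * (m : ℝ) * (Real.log (Real.tan (s * R / 2)) - Real.log (Real.tan (1 * R / 2)))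
    + (Real.log (Real.sin (s * R)) + Real.log (Real.sin (1 * R))) - 2 * Real.log R

private lemma aux_ell_hasDeriv (m : ℕ) {s R : ℝ} (hs : 0 < s) (hs1 : s ≤ 1)
    (hR : 0 < R) (hR' : R < π) :
    HasDerivAt (ell m s)
      (2 * (m : ℝ) * (s / Real.sin (s * R) - 1 / Real.sin (1 * R))
        + (s * Real.cos (s * R) / Real.sin (s * R)
            + 1 * Real.cos (1 * R) / Real.sin (1 * R)) - 2 * (1 / R)) R := by
  have h1 := aux_deriv_log_tan hs hs1 hR hR'
  have h2 := aux_deriv_log_tan (c := 1) one_pos le_rfl hR hR'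
  have h3 := aux_deriv_log_sin hs hs1 hR hR'
  have h4 := aux_deriv_log_sin (c := 1) one_pos le_rfl hR hR'
  have h5 : HasDerivAt (fun R : ℝ => Real.log R) (1 / R) R := by
    simpa using Real.hasDerivAt_log hR.ne'
  have := ((((h1.sub h2).const_mul (2 * (m : ℝ))).add (h3.add h4)).sub (h5.const_mul 2))
  exact this

private lemma aux_ell_deriv_neg (m : ℕ) {s R : ℝ} (hs : 0 < s) (hs1 : s ≤ 1)
    (hR : 0 < R) (hR' : R < π) :
    2 * (m : ℝ) * (s / Real.sin (s * R) - 1 / Real.sin (1 * R))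
        + (s * Real.cos (s * R) / Real.sin (s * R)
            + 1 * Real.cos (1 * R) / Real.sin (1 * R)) - 2 * (1 / R) < 0 := by
  have hsR : 0 < s * R := mul_pos hs hR
  have hsR' : s * R < π := lt_of_le_of_lt (by nlinarith) hR'
  have hsinsR : 0 < Real.sin (s * R) := Real.sin_pos_of_pos_of_lt_pi hsR hsR'
  have hsinR : 0 < Real.sin R := Real.sin_pos_of_pos_of_lt_pi hR hR'
  -- first term nonpositive: s * sin R ≤ sin (s*R)
  have hconc : s * Real.sin R ≤ Real.sin (s * R) :=
    aux_sin_mul_ge hs.le hs1 hR.le hR'.le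
  have ht1 : s / Real.sin (s * R) - 1 / Real.sin (1 * R) ≤ 0 := by
    rw [one_mul, sub_nonpos, div_le_div_iff₀ hsinsR hsinR]
    linarith
  have ht1' : 2 * (m : ℝ) * (s / Real.sin (s * R) - 1 / Real.sin (1 * R)) ≤ 0 :=
    mul_nonpos_of_nonneg_of_nonpos (by positivity) ht1
  -- second term: s * cot (s*R) < 1/R
  have ht2 : s * Real.cos (s * R) / Real.sin (s * R) < 1 / R := by
    have := aux_cot_lt_inv hsR hsR'
    have h' := mul_lt_mul_of_pos_left this hs
    calc s * Real.cos (s * R) / Real.sin (s * R)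
        = s * (Real.cos (s * R) / Real.sin (s * R)) := by ring
      _ < s * (1 / (s * R)) := h'
      _ = 1 / R := by field_simp
  have ht3 : 1 * Real.cos (1 * R) / Real.sin (1 * R) < 1 / R := by
    rw [one_mul, one_mul]
    exact aux_cot_lt_inv hR hR'
  linarith

private lemma aux_ell_strictAnti (m : ℕ) {s : ℝ} (hs : 0 < s) (hs1 : s ≤ 1) :
    StrictAntiOn (ell m s) (Set.Ioo 0 π) := by
  apply strictAntiOn_of_deriv_neg (convex_Ioo 0 π)
  · intro R hR
    exact ((aux_ell_hasDeriv m hs hs1 hR.1 hR.2).differentiableAt).continuousAt.continuousWithinAt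
  · intro R hR
    rw [interior_Ioo] at hR
    rw [(aux_ell_hasDeriv m hs hs1 hR.1 hR.2).deriv]
    exact aux_ell_deriv_neg m hs hs1 hR.1 hR.2

/-- the function `g(s,R)` equals `exp (ell m s R)` -/
private lemma aux_g_eq_exp (m : ℕ) {s R : ℝ} (hs : 0 < s) (hs1 : s ≤ 1)
    (hR : 0 < R) (hR' : R < π) :
    Real.tan (s * R / 2) ^ (2 * m) * Real.sin (s * R) * Real.sin R
        / (Real.tan (R / 2) ^ (2 * m) * R ^ 2) = Real.exp (ell m s R) := by
  have hsR : 0 < s * R := mul_pos hs hR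
  have hsR' : s * R < π := lt_of_le_of_lt (by nlinarith) hR'
  have htanS : 0 < Real.tan (s * R / 2) :=
    Real.tan_pos_of_pos_of_lt_pi_div_two (by linarith) (by linarith)
  have htanR : 0 < Real.tan (R / 2) :=
    Real.tan_pos_of_pos_of_lt_pi_div_two (by linarith) (by linarith)
  have hsinsR : 0 < Real.sin (s * R) := Real.sin_pos_of_pos_of_lt_pi hsR hsR'
  have hsinR : 0 < Real.sin R := Real.sin_pos_of_pos_of_lt_pi hR hR'
  have hpos : 0 < Real.tan (s * R / 2) ^ (2 * m) * Real.sin (s * R) * Real.sin R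
      / (Real.tan (R / 2) ^ (2 * m) * R ^ 2) := by positivity
  rw [← Real.exp_log hpos]
  congr 1
  rw [Real.log_div (by positivity) (by positivity), Real.log_mul (by positivity) hsinR.ne',
    Real.log_mul (by positivity) hsinsR.ne', Real.log_mul (by positivity) (by positivity),
    Real.log_pow, Real.log_pow, Real.log_pow]
  unfold ell
  push_cast
  ring

/-- `g(s, ·)` is strictly decreasing on `(0, π)` -/
private lemma aux_g_lt (m : ℕ) {s R₁ R₂ : ℝ} (hs : 0 < s) (hs1 : s ≤ 1)
    (h1 : R₁ ∈ Set.Ioo 0 π) (h2 : R₂ ∈ Set.Ioo 0 π) (h12 : R₁ < R₂) :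
    Real.tan (s * R₂ / 2) ^ (2 * m) * Real.sin (s * R₂) * Real.sin R₂
        / (Real.tan (R₂ / 2) ^ (2 * m) * R₂ ^ 2)
      < Real.tan (s * R₁ / 2) ^ (2 * m) * Real.sin (s * R₁) * Real.sin R₁
        / (Real.tan (R₁ / 2) ^ (2 * m) * R₁ ^ 2) := by
  rw [aux_g_eq_exp m hs hs1 h1.1 h1.2, aux_g_eq_exp m hs hs1 h2.1 h2.2]
  exact Real.exp_lt_exp.2 (aux_ell_strictAnti m hs hs1 h1 h2 h12)

private lemma aux_g_contOn (m : ℕ) {R : ℝ} (hR : R ∈ Set.Ioo 0 π) :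
    ContinuousOn (fun s : ℝ => Real.tan (s * R / 2) ^ (2 * m) * Real.sin (s * R) * Real.sin R
      / (Real.tan (R / 2) ^ (2 * m) * R ^ 2)) (Set.Icc 0 1) := by
  obtain ⟨hR0, hRπ⟩ := hR
  apply ContinuousOn.div_const
  apply ContinuousOn.mul _ continuousOn_const
  apply ContinuousOn.mul _ (by fun_prop)
  apply ContinuousOn.pow
  intro s hs
  have hc : Real.cos (s * R / 2) ≠ 0 := by
    refine (Real.cos_pos_of_mem_Ioo ⟨?_, ?_⟩).ne'
    · nlinarith [Real.pi_pos, hs.1, hs.2]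
    · nlinarith [hs.1, hs.2]
  have hin : ContinuousAt (fun s : ℝ => s * R / 2) s :=
    ((continuous_id.mul continuous_const).div_const 2).continuousAt
  exact (ContinuousAt.comp (f := fun s : ℝ => s * R / 2) (x := s)
    (Real.continuousAt_tan.mpr hc) hin).continuousWithinAt

private lemma aux_main (m : ℕ) {R : ℝ} (hR : R ∈ Set.Ioo 0 π) :
    (0 < ∫ s in (0:ℝ)..1, Real.tan (s * R / 2) ^ (2 * m) * Real.sin (s * R) * Real.sin R
        / (Real.tan (R / 2) ^ (2 * m) * R ^ 2)) ∧
    ((m : ℝ)^2 * Real.tan (R/2)^(2*m) /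
        (Real.sin R * ∫ r in (0:ℝ)..R, Real.tan (r/2)^(2*m) * Real.sin r)) * R^3
      = (m : ℝ)^2 / ∫ s in (0:ℝ)..1, Real.tan (s * R / 2) ^ (2 * m) * Real.sin (s * R) * Real.sin R
        / (Real.tan (R / 2) ^ (2 * m) * R ^ 2) := by
  obtain ⟨hR0, hRπ⟩ := hR
  have hsinR : 0 < Real.sin R := Real.sin_pos_of_pos_of_lt_pi hR0 hRπ
  have htanR : 0 < Real.tan (R / 2) :=
    Real.tan_pos_of_pos_of_lt_pi_div_two (by linarith) (by linarith)
  -- continuity of the integrand of I on [0, R]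
  have hcont : ContinuousOn (fun r : ℝ => Real.tan (r/2)^(2*m) * Real.sin r) (Set.Icc 0 R) := by
    apply ContinuousOn.mul _ (by fun_prop)
    apply ContinuousOn.pow
    intro r hr
    have hc : Real.cos (r / 2) ≠ 0 := by
      refine (Real.cos_pos_of_mem_Ioo ⟨?_, ?_⟩).ne'
      · nlinarith [Real.pi_pos, hr.1, hr.2]
      · nlinarith [hr.1, hr.2]
    have hin : ContinuousAt (fun r : ℝ => r / 2) r := (continuous_id.div_const 2).continuousAt
    exact (ContinuousAt.comp (f := fun r : ℝ => r / 2) (x := r) (Real.continuousAt_tan.mpr hc) hin).continuousWithinAt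
  have hIint : IntervalIntegrable (fun r : ℝ => Real.tan (r/2)^(2*m) * Real.sin r)
      MeasureTheory.volume 0 R := by
    apply ContinuousOn.intervalIntegrable
    rwa [Set.uIcc_of_le hR0.le]
  have hI : 0 < ∫ r in (0:ℝ)..R, Real.tan (r/2)^(2*m) * Real.sin r := by
    apply intervalIntegral.intervalIntegral_pos_of_pos_on hIint _ hR0
    intro x hx
    have htx : 0 < Real.tan (x / 2) :=
      Real.tan_pos_of_pos_of_lt_pi_div_two (by linarith [hx.1]) (by linarith [hx.2])
    have hsx : 0 < Real.sin x := Real.sin_pos_of_pos_of_lt_pi hx.1 (by linarith [hx.2])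
    positivity
  -- substitution r = R * s
  have hsub : (∫ s in (0:ℝ)..1, Real.tan (R * s / 2)^(2*m) * Real.sin (R * s))
      = R⁻¹ * ∫ r in (0:ℝ)..R, Real.tan (r/2)^(2*m) * Real.sin r := by
    have := intervalIntegral.integral_comp_mul_left (a := (0:ℝ)) (b := 1)
      (fun r : ℝ => Real.tan (r/2)^(2*m) * Real.sin r) hR0.ne'
    simpa using this
  have hrw : ∀ s : ℝ, Real.tan (s * R / 2) ^ (2 * m) * Real.sin (s * R) * Real.sin R
        / (Real.tan (R / 2) ^ (2 * m) * R ^ 2)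
      = (Real.tan (R * s / 2)^(2*m) * Real.sin (R * s))
          * (Real.sin R / (Real.tan (R / 2) ^ (2 * m) * R ^ 2)) := by
    intro s
    rw [mul_comm s R]
    ring
  have hΦ : (∫ s in (0:ℝ)..1, Real.tan (s * R / 2) ^ (2 * m) * Real.sin (s * R) * Real.sin R
        / (Real.tan (R / 2) ^ (2 * m) * R ^ 2))
      = (R⁻¹ * ∫ r in (0:ℝ)..R, Real.tan (r/2)^(2*m) * Real.sin r)
          * (Real.sin R / (Real.tan (R / 2) ^ (2 * m) * R ^ 2)) := by
    simp only [hrw]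
    rw [intervalIntegral.integral_mul_const, hsub]
  constructor
  · rw [hΦ]
    positivity
  · have hTne : Real.tan (R/2)^(2*m) ≠ 0 := pow_ne_zero _ htanR.ne'
    rw [hΦ]
    field_simp

theorem xi_R_cubed_strictMono (m : ℕ) (hm : 1 ≤ m) :
    StrictMonoOn
      (fun R : ℝ =>
        ((m : ℝ)^2 * Real.tan (R/2)^(2*m) /
          (Real.sin R * ∫ r in (0:ℝ)..R, Real.tan (r/2)^(2*m) * Real.sin r)) * R^3)
      (Set.Ioo 0 π) := by
  intro R₁ hR₁ R₂ hR₂ h12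
  simp only []
  rw [(aux_main m hR₁).2, (aux_main m hR₂).2]
  have hm' : (0:ℝ) < (m : ℝ)^2 := by
    have : (0:ℝ) < (m : ℝ) := by exact_mod_cast hm
    positivity
  apply div_lt_div_of_pos_left hm' (aux_main m hR₂).1
  apply intervalIntegral.integral_lt_integral_of_continuousOn_of_le_of_exists_lt one_pos
    (aux_g_contOn m hR₂) (aux_g_contOn m hR₁)
  · intro s hs
    exact (aux_g_lt m hs.1 hs.2 hR₁ hR₂ h12).le
  · exact ⟨1, ⟨zero_le_one, le_rfl⟩, aux_g_lt m one_pos le_rfl hR₁ hR₂ h12⟩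
end

section
/- For each integer m ≥ 1 and R ∈ (0, π), define ξ_m(R) = m² (tan(R/2))^{2m} / ( sin R · ∫₀^R (tan(r/2))^{2m} sin r dr ). Then the function R ↦ ξ_m(R) · sin³R is strictly decreasing on (0, π). -/
open Real Set MeasureTheory intervalIntegral

noncomputable def phiS (m : ℕ) (r : ℝ) : ℝ := Real.tan (r/2)^(2*m) * Real.sin r
noncomputable def IintS (m : ℕ) (R : ℝ) : ℝ := ∫ r in (0:ℝ)..R, phiS m r
noncomputable def gS (m : ℕ) (R : ℝ) : ℝ := Real.tan (R/2)^(2*m) * Real.sin R^2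
noncomputable def HS (m : ℕ) (R : ℝ) : ℝ := gS m R - (2*(m:ℝ) + 2*Real.cos R) * IintS m R
noncomputable def FS (m : ℕ) (R : ℝ) : ℝ := (m:ℝ)^2 * gS m R / IintS m R

lemma cos_half_pos' {r : ℝ} (hr : r ∈ Ioo (-π) π) : 0 < Real.cos (r/2) := by
  apply Real.cos_pos_of_mem_Ioo
  constructor
  · linarith [hr.1]
  · linarith [hr.2]

lemma phiS_contOn (m : ℕ) : ContinuousOn (phiS m) (Ioo (-π) π) := by
  intro r hr
  apply ContinuousAt.continuousWithinAt
  have hc : Real.cos (r/2) ≠ 0 := (cos_half_pos' hr).ne'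
  have ht : ContinuousAt (fun x : ℝ => Real.tan (x/2)) r :=
    ContinuousAt.comp (g := Real.tan) (f := fun x : ℝ => x/2)
      (Real.continuousAt_tan.2 hc) (continuousAt_id.div_const 2)
  exact (ht.pow _).mul Real.continuous_sin.continuousAt

lemma mem_Ioo_of_Icc {x r : ℝ} (hx : x ∈ Ioo 0 π) (hr : r ∈ Icc 0 x) : r ∈ Ioo (-π) π :=
  ⟨by have := hr.1; linarith [Real.pi_pos], lt_of_le_of_lt hr.2 hx.2⟩

lemma phiS_intble (m : ℕ) {R : ℝ} (hR : R ∈ Ioo (-π) π) :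
    IntervalIntegrable (phiS m) volume 0 R := by
  apply ContinuousOn.intervalIntegrable
  apply (phiS_contOn m).mono
  exact Set.OrdConnected.uIcc_subset (ordConnected_Ioo)
    ⟨neg_neg_iff_pos.2 Real.pi_pos, Real.pi_pos⟩ hR

lemma hasDerivAt_IintS (m : ℕ) {R : ℝ} (hR : R ∈ Ioo (-π) π) :
    HasDerivAt (IintS m) (phiS m R) R :=
  intervalIntegral.integral_hasDerivAt_right (phiS_intble m hR)
    ((phiS_contOn m).stronglyMeasurableAtFilter isOpen_Ioo R hR)
    ((phiS_contOn m).continuousAt (isOpen_Ioo.mem_nhds hR))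

lemma phiS_pos (m : ℕ) {r : ℝ} (hr : r ∈ Ioo 0 π) : 0 < phiS m r := by
  have h1 : 0 < Real.tan (r/2) :=
    Real.tan_pos_of_pos_of_lt_pi_div_two (by linarith [hr.1]) (by linarith [hr.2])
  have h2 : 0 < Real.sin r := Real.sin_pos_of_pos_of_lt_pi hr.1 hr.2
  exact mul_pos (pow_pos h1 _) h2

lemma IintS_pos (m : ℕ) {R : ℝ} (hR : R ∈ Ioo 0 π) : 0 < IintS m R := by
  have hR' : R ∈ Ioo (-π) π := ⟨by linarith [hR.1, Real.pi_pos], hR.2⟩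
  exact intervalIntegral.intervalIntegral_pos_of_pos_on (phiS_intble m hR')
    (fun r hr => phiS_pos m ⟨hr.1, lt_trans hr.2 hR.2⟩) hR.1

lemma hasDerivAt_gS (m : ℕ) (hm : 1 ≤ m) {R : ℝ} (hR : R ∈ Ioo (-π) π) :
    HasDerivAt (gS m) (phiS m R * (2*(m:ℝ) + 2*Real.cos R)) R := by
  have hc : Real.cos (R/2) ≠ 0 := (cos_half_pos' hR).ne'
  have ht : HasDerivAt (fun r : ℝ => Real.tan (r/2)) (1 / Real.cos (R/2)^2 * (1/2)) R :=
    by have := (Real.hasDerivAt_tan hc).comp R ((hasDerivAt_id R).div_const 2); exact this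
  have htp : HasDerivAt (fun r : ℝ => Real.tan (r/2)^(2*m))
      (((2*m : ℕ) : ℝ) * Real.tan (R/2)^(2*m - 1) * (1 / Real.cos (R/2)^2 * (1/2))) R :=
    ht.pow _
  have hs : HasDerivAt (fun r : ℝ => Real.sin r^2)
      (((2 : ℕ) : ℝ) * Real.sin R^(2-1) * Real.cos R) R := (Real.hasDerivAt_sin R).pow 2
  have h : HasDerivAt (fun r : ℝ => Real.tan (r/2)^(2*m) * Real.sin r^2) _ R := htp.mul hs
  convert h using 1
  · rfl
  obtain ⟨k, hk⟩ : ∃ k, 2*m = k + 1 := ⟨2*m - 1, by omega⟩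
  have hk1 : 2*m - 1 = k := by omega
  unfold phiS
  rw [hk1, hk]
  have htan : Real.tan (R/2) = Real.sin (R/2) / Real.cos (R/2) := Real.tan_eq_sin_div_cos _
  have hsin : Real.sin R = 2 * Real.sin (R/2) * Real.cos (R/2) := by
    rw [show R = 2*(R/2) by ring, Real.sin_two_mul]; ring_nf
  have hcos : Real.cos R = 2 * Real.cos (R/2)^2 - 1 := by
    rw [show R = 2*(R/2) by ring, Real.cos_two_mul]; ring_nf
  rw [htan, hsin, hcos]
  set s := Real.sin (R/2)
  set c := Real.cos (R/2)
  rw [pow_succ]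
  push_cast
  have hkm : (k:ℝ) = 2*(m:ℝ) - 1 := by
    have h2 : ((2*m : ℕ) : ℝ) = ((k+1 : ℕ) : ℝ) := by rw [hk]
    push_cast at h2
    linarith
  rw [hkm]
  field_simp
  ring

lemma hasDerivAt_HS (m : ℕ) (hm : 1 ≤ m) {R : ℝ} (hR : R ∈ Ioo (-π) π) :
    HasDerivAt (HS m) (2 * Real.sin R * IintS m R) R := by
  have h2 : HasDerivAt (fun r : ℝ => 2*(m:ℝ) + 2*Real.cos r) (2 * (-Real.sin R)) R :=
    ((Real.hasDerivAt_cos R).const_mul 2).const_add (2*(m:ℝ))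
  have h : HasDerivAt (fun r : ℝ => gS m r - (2*(m:ℝ) + 2*Real.cos r) * IintS m r) _ R := (hasDerivAt_gS m hm hR).sub (show HasDerivAt (fun r : ℝ => (2*(m:ℝ) + 2*Real.cos r) * IintS m r) _ R from h2.mul (hasDerivAt_IintS m hR))
  convert h using 1
  · rfl
  ring

lemma HS_zero (m : ℕ) : HS m 0 = 0 := by
  unfold HS gS IintS
  simp

lemma HS_pos (m : ℕ) (hm : 1 ≤ m) {x : ℝ} (hx : x ∈ Ioo 0 π) : 0 < HS m x := by
  have mono : StrictMonoOn (HS m) (Icc 0 x) := by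
    apply strictMonoOn_of_deriv_pos (convex_Icc 0 x)
    · intro r hr
      exact (hasDerivAt_HS m hm (mem_Ioo_of_Icc hx hr)).continuousAt.continuousWithinAt
    · intro r hr
      rw [interior_Icc] at hr
      have hr' : r ∈ Ioo 0 π := ⟨hr.1, lt_trans hr.2 hx.2⟩
      rw [(hasDerivAt_HS m hm (mem_Ioo_of_Icc hx ⟨le_of_lt hr.1, le_of_lt hr.2⟩)).deriv]
      exact mul_pos (mul_pos two_pos (Real.sin_pos_of_pos_of_lt_pi hr'.1 hr'.2)) (IintS_pos m hr')
  have h := mono (left_mem_Icc.2 (le_of_lt hx.1)) (right_mem_Icc.2 (le_of_lt hx.1)) hx.1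
  rwa [HS_zero] at h

lemma hasDerivAt_FS (m : ℕ) (hm : 1 ≤ m) {x : ℝ} (hx : x ∈ Ioo 0 π) :
    HasDerivAt (FS m)
      (((m:ℝ)^2 * (phiS m x * (2*(m:ℝ) + 2*Real.cos x)) * IintS m x -
        (m:ℝ)^2 * gS m x * phiS m x) / (IintS m x)^2) x := by
  have hx' : x ∈ Ioo (-π) π := ⟨by linarith [hx.1, Real.pi_pos], hx.2⟩
  exact ((hasDerivAt_gS m hm hx').const_mul ((m:ℝ)^2)).div (hasDerivAt_IintS m hx')
    (IintS_pos m hx).ne'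

lemma FS_strictAnti (m : ℕ) (hm : 1 ≤ m) : StrictAntiOn (FS m) (Ioo 0 π) := by
  apply strictAntiOn_of_deriv_neg (convex_Ioo 0 π)
  · intro x hx
    exact (hasDerivAt_FS m hm hx).continuousAt.continuousWithinAt
  · intro x hx
    rw [interior_Ioo] at hx
    rw [(hasDerivAt_FS m hm hx).deriv]
    apply div_neg_of_neg_of_pos
    · have hnum : (m:ℝ)^2 * (phiS m x * (2*(m:ℝ) + 2*Real.cos x)) * IintS m x -
          (m:ℝ)^2 * gS m x * phiS m x = -((m:ℝ)^2 * phiS m x * HS m x) := by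
        unfold HS; ring
      rw [hnum, neg_lt_zero]
      have hm' : (0:ℝ) < (m:ℝ) := by exact_mod_cast hm
      exact mul_pos (mul_pos (pow_pos hm' 2) (phiS_pos m hx)) (HS_pos m hm hx)
    · exact pow_pos (IintS_pos m hx) 2

theorem xi_sin_cubed_strictAnti (m : ℕ) (hm : 1 ≤ m) :
    StrictAntiOn
      (fun R : ℝ =>
        ((m : ℝ)^2 * Real.tan (R/2)^(2*m) /
          (Real.sin R * ∫ r in (0:ℝ)..R, Real.tan (r/2)^(2*m) * Real.sin r)) * Real.sin R^3)
      (Set.Ioo 0 π) := by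
  have key : ∀ R ∈ Ioo 0 π,
      ((m : ℝ)^2 * Real.tan (R/2)^(2*m) /
        (Real.sin R * ∫ r in (0:ℝ)..R, Real.tan (r/2)^(2*m) * Real.sin r)) * Real.sin R^3
      = FS m R := by
    intro R hR
    have hsin : Real.sin R ≠ 0 := (Real.sin_pos_of_pos_of_lt_pi hR.1 hR.2).ne'
    have hI : IintS m R ≠ 0 := (IintS_pos m hR).ne'
    unfold FS gS
    rw [show (∫ r in (0:ℝ)..R, Real.tan (r/2)^(2*m) * Real.sin r) = IintS m R from rfl]
    field_simp
  intro a ha b hb hab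
  dsimp only
  rw [key a ha, key b hb]
  exact FS_strictAnti m hm ha hb hab
end

section
/- For each integer m ≥ 1 and R ∈ (0, π), define ξ_m(R) = m² (tan(R/2))^{2m} / ( sin R · ∫₀^R (tan(r/2))^{2m} sin r dr ). Then the function R ↦ ξ_m(R) · sin³(R/2) is strictly increasing on (0, π). -/
open Real Set


noncomputable def psiA (m : ℕ) (u : ℝ) : ℝ := u^(2*m+1) / (1+u^2)^2
noncomputable def JA (m : ℕ) (t : ℝ) : ℝ := ∫ u in (0:ℝ)..t, psiA m u

lemma psiA_cont (m : ℕ) : Continuous (psiA m) := by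
  apply Continuous.div (by continuity) (by continuity)
  intro u; positivity

lemma JA_hasDerivAt (m : ℕ) (t : ℝ) : HasDerivAt (JA m) (psiA m t) t :=
  ((psiA_cont m).integral_hasStrictDerivAt 0 t).hasDerivAt

noncomputable def DA (m : ℕ) (t : ℝ) : ℝ := (1+t^2)*((2*(m:ℝ)+2)+(2*(m:ℝ)+1)*t^2)

lemma DA_pos (m : ℕ) (t : ℝ) : 0 < DA m t := by unfold DA; positivity

noncomputable def KA (m : ℕ) (t : ℝ) : ℝ := JA m t - t^(2*m+2)/DA m t

lemma KA_hasDerivAt (m : ℕ) (t : ℝ) :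
    HasDerivAt (KA m)
      (t^(2*m+1) * ((6*(m:ℝ)+4)*t^2 + (6*(m:ℝ)+3)*t^4) /
        ((1+t^2)^2 * ((2*(m:ℝ)+2)+(2*(m:ℝ)+1)*t^2)^2)) t := by
  have hsq : HasDerivAt (fun t : ℝ => t^2) (2*t) t := by simpa using hasDerivAt_pow 2 t
  have h1 : HasDerivAt (fun t : ℝ => t^(2*m+2)) ((2*(m:ℝ)+2)*t^(2*m+1)) t := by
    have := hasDerivAt_pow (2*m+2) t
    simpa [Nat.add_sub_cancel] using this.congr_deriv (by push_cast; ring)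
  have hD : HasDerivAt (DA m)
      ((2*t)*((2*(m:ℝ)+2)+(2*(m:ℝ)+1)*t^2) + (1+t^2)*((2*(m:ℝ)+1)*(2*t))) t := by
    unfold DA
    have := ((hasDerivAt_const t (1:ℝ)).add hsq).mul
      ((hasDerivAt_const t (2*(m:ℝ)+2)).add ((hasDerivAt_const t (2*(m:ℝ)+1)).mul hsq))
    exact this.congr_deriv (by simp only [Pi.add_apply, Pi.mul_apply]; ring)
  have hq : HasDerivAt (fun t => t^(2*m+2)/DA m t)
      (((2*(m:ℝ)+2)*t^(2*m+1) * DA m t - t^(2*m+2) *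
        ((2*t)*((2*(m:ℝ)+2)+(2*(m:ℝ)+1)*t^2) + (1+t^2)*((2*(m:ℝ)+1)*(2*t)))) / (DA m t)^2) t :=
    h1.div hD (DA_pos m t).ne'
  have hK := (JA_hasDerivAt m t).sub hq
  refine hK.congr_deriv ?_
  unfold psiA DA
  have h1t : (0:ℝ) < 1 + t^2 := by positivity
  have h2t : (0:ℝ) < (2*(m:ℝ)+2)+(2*(m:ℝ)+1)*t^2 := by positivity
  field_simp
  ring

lemma JA_pos (m : ℕ) {t : ℝ} (ht : 0 < t) : 0 < JA m t := by
  apply intervalIntegral.intervalIntegral_pos_of_pos_on ((psiA_cont m).intervalIntegrable 0 t) _ ht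
  intro x hx
  have hx0 : 0 < x := hx.1
  unfold psiA
  positivity

lemma key_ineq (m : ℕ) {t : ℝ} (ht : 0 < t) : t^(2*m+2)/DA m t < JA m t := by
  have hmono : StrictMonoOn (KA m) (Ici 0) := by
    apply strictMonoOn_of_deriv_pos (convex_Ici 0)
    · exact fun x _ => ((KA_hasDerivAt m x).differentiableAt).continuousAt.continuousWithinAt
    · intro x hx
      rw [interior_Ici] at hx
      rw [(KA_hasDerivAt m x).deriv]
      have hx : (0:ℝ) < x := hx
      have h1 : (0:ℝ) < (6*(m:ℝ)+4)*x^2 + (6*(m:ℝ)+3)*x^4 := by positivity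
      positivity
  have h0 : KA m 0 = 0 := by
    unfold KA JA
    simp [zero_pow (by omega : 2*m+2 ≠ 0)]
  have := hmono (self_mem_Ici : (0:ℝ) ∈ Ici 0) (le_of_lt ht : t ∈ Ici 0) ht
  rw [h0] at this
  unfold KA at this
  linarith

noncomputable def HA (m : ℕ) (t : ℝ) : ℝ := Real.sqrt (1+t^2) * JA m t / t^(2*m+2)

lemma HA_pos (m : ℕ) {t : ℝ} (ht : 0 < t) : 0 < HA m t := by
  unfold HA
  have h1 : (0:ℝ) < Real.sqrt (1+t^2) := Real.sqrt_pos.mpr (by positivity)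
  have h2 := JA_pos m ht
  positivity

lemma HA_strictAnti (m : ℕ) : StrictAntiOn (HA m) (Ioi 0) := by
  have hd : ∀ t : ℝ, 0 < t → HasDerivAt (HA m)
      (((t/Real.sqrt (1+t^2) * JA m t + Real.sqrt (1+t^2) * psiA m t) * t^(2*m+2)
        - Real.sqrt (1+t^2) * JA m t * ((2*(m:ℝ)+2)*t^(2*m+1))) / (t^(2*m+2))^2) t := by
    intro t ht
    have h1t : (0:ℝ) < 1 + t^2 := by positivity
    have hs : HasDerivAt (fun t : ℝ => Real.sqrt (1+t^2)) (t/Real.sqrt (1+t^2)) t := by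
      have hsq : HasDerivAt (fun t : ℝ => 1+t^2) (2*t) t := by
        exact ((hasDerivAt_const t (1:ℝ)).add ((hasDerivAt_pow 2 t).congr_deriv (show _ = 2*t by ring))).congr_deriv (zero_add _)
      have := hsq.sqrt h1t.ne'
      exact this.congr_deriv (by ring)
    have hpow : HasDerivAt (fun t : ℝ => t^(2*m+2)) ((2*(m:ℝ)+2)*t^(2*m+1)) t := by
      have := hasDerivAt_pow (2*m+2) t
      simpa [Nat.add_sub_cancel] using this.congr_deriv (by push_cast; ring)
    exact (hs.mul (JA_hasDerivAt m t)).div hpow (by positivity)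
  apply strictAntiOn_of_deriv_neg (convex_Ioi 0)
  · exact fun x hx => ((hd x hx).differentiableAt).continuousAt.continuousWithinAt
  · intro x hx
    rw [interior_Ioi] at hx
    have hx : (0:ℝ) < x := hx
    rw [(hd x hx).deriv]
    have h1t : (0:ℝ) < 1 + x^2 := by positivity
    have hsp : (0:ℝ) < Real.sqrt (1+x^2) := Real.sqrt_pos.mpr h1t
    have hsq : Real.sqrt (1+x^2)^2 = 1+x^2 := Real.sq_sqrt h1t.le
    apply div_neg_of_neg_of_pos _ (by positivity)
    -- numerator < 0
    have hkey := key_ineq m hx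
    unfold DA at hkey
    have h2 : (0:ℝ) < (2*(m:ℝ)+2)+(2*(m:ℝ)+1)*x^2 := by positivity
    -- need: (x/s * J + s * psi) * x^(2m+2) < s * J * ((2m+2) x^(2m+1))
    rw [sub_neg]
    have hpsi : psiA m x = x^(2*m+1)/(1+x^2)^2 := rfl
    have hdiv : x^(2*m+2)/((1+x^2)*((2*(m:ℝ)+2)+(2*(m:ℝ)+1)*x^2)) < JA m x := hkey
    rw [div_lt_iff₀ (by positivity)] at hdiv
    have hx1 : x^(2*m+2) = x^(2*m+1)*x := by rw [pow_succ]
    have hss : x/Real.sqrt (1+x^2) = x * Real.sqrt (1+x^2) / (1+x^2) := by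
      rw [div_eq_div_iff hsp.ne' h1t.ne']
      linear_combination (-x) * hsq
    rw [hpsi, hss]
    have expand : (x * Real.sqrt (1+x^2) / (1+x^2) * JA m x
        + Real.sqrt (1+x^2) * (x^(2*m+1)/(1+x^2)^2)) * x^(2*m+2)
        = Real.sqrt (1+x^2) / (1+x^2) * (x * JA m x * x^(2*m+2)
          + x^(2*m+1) * x^(2*m+2) / (1+x^2)) := by
      field_simp
    rw [expand]
    have target : Real.sqrt (1+x^2) * JA m x * ((2*(m:ℝ)+2)*x^(2*m+1))
        = Real.sqrt (1+x^2) / (1+x^2) * ((1+x^2) * JA m x * ((2*(m:ℝ)+2)*x^(2*m+1))) := by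
      field_simp
    rw [target]
    apply mul_lt_mul_of_pos_left _ (by positivity)
    -- x * J * x^(2m+2) + x^(2m+1)*x^(2m+2)/(1+x^2) < (1+x^2)*J*((2m+2)x^(2m+1))
    have hJ := JA_pos m hx
    have hxp : (0:ℝ) < x^(2*m+1) := pow_pos hx _
    rw [hx1]
    rw [hx1] at hdiv
    have key2 : x^(2*m+1)*x/(1+x^2) < ((2*(m:ℝ)+2)+(2*(m:ℝ)+1)*x^2) * JA m x := by
      rw [div_lt_iff₀ h1t]
      nlinarith [hdiv]
    have key3 := mul_lt_mul_of_pos_left key2 hxp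
    have hB : x^(2*m+1)*(x^(2*m+1)*x)/(1+x^2) = x^(2*m+1)*(x^(2*m+1)*x/(1+x^2)) := by ring
    rw [hB]
    nlinarith [key3, mul_pos hxp hJ, mul_pos (mul_pos hx hx) (mul_pos hxp hJ)]

lemma cos_half_pos {R x : ℝ} (hR : R ∈ Ioo 0 π) (hx : x ∈ Icc 0 R) : 0 < Real.cos (x/2) := by
  apply Real.cos_pos_of_mem_Ioo
  constructor
  · linarith [hx.1, Real.pi_pos]
  · linarith [hx.2, hR.2]

lemma integral_eq (m : ℕ) {R : ℝ} (hR : R ∈ Ioo 0 π) :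
    (∫ r in (0:ℝ)..R, Real.tan (r/2)^(2*m) * Real.sin r) = 4 * JA m (Real.tan (R/2)) := by
  have huIcc : uIcc (0:ℝ) R = Icc 0 R := uIcc_of_le hR.1.le
  have hderiv : ∀ x ∈ uIcc (0:ℝ) R,
      HasDerivAt (fun y => Real.tan (y/2)) (1/(2*Real.cos (x/2)^2)) x := by
    intro x hx
    rw [huIcc] at hx
    have hc := cos_half_pos hR hx
    have h1 : HasDerivAt (fun y : ℝ => y/2) (1/2) x := (hasDerivAt_id x).div_const 2
    have := (Real.hasDerivAt_tan hc.ne').comp x h1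
    exact this.congr_deriv (by ring)
  have hcont' : ContinuousOn (fun x => 1/(2*Real.cos (x/2)^2)) (uIcc (0:ℝ) R) := by
    apply ContinuousOn.div continuousOn_const
    · exact (Real.continuous_cos.comp (continuous_id.div_const 2)).continuousOn.pow 2 |>.const_smul 2
        |>.congr (fun x _ => by simp [smul_eq_mul])
    · intro x hx
      rw [huIcc] at hx
      have hc := cos_half_pos hR hx
      positivity
  have hsub := intervalIntegral.integral_comp_smul_deriv hderiv hcont' (psiA_cont m)
  have h0 : Real.tan ((0:ℝ)/2) = 0 := by norm_num
  rw [h0] at hsub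
  have hcongr : (∫ r in (0:ℝ)..R, Real.tan (r/2)^(2*m) * Real.sin r)
      = ∫ x in (0:ℝ)..R, 4 * ((1/(2*Real.cos (x/2)^2)) • (psiA m ∘ fun y => Real.tan (y/2)) x) := by
    apply intervalIntegral.integral_congr
    intro x hx
    rw [huIcc] at hx
    have hc := cos_half_pos hR hx
    have hsin : Real.sin x = 2 * Real.sin (x/2) * Real.cos (x/2) := by
      rw [← Real.sin_two_mul]; congr 1; ring
    simp only [Function.comp, smul_eq_mul, psiA]
    rw [hsin, Real.tan_eq_sin_div_cos]
    have h1 : 1 + (Real.sin (x/2)/Real.cos (x/2))^2 = 1/Real.cos (x/2)^2 := by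
      field_simp
      linarith [Real.sin_sq_add_cos_sq (x/2)]
    rw [h1]
    simp only [div_pow]
    field_simp
    ring
  rw [hcongr, intervalIntegral.integral_const_mul, hsub, JA]

lemma f_eq (m : ℕ) {R : ℝ} (hR : R ∈ Ioo 0 π) :
    ((m : ℝ)^2 * Real.tan (R/2)^(2*m) /
        (Real.sin R * ∫ r in (0:ℝ)..R, Real.tan (r/2)^(2*m) * Real.sin r)) * Real.sin (R/2)^3
      = (m:ℝ)^2/8 * (1 / HA m (Real.tan (R/2))) := by
  have hc : 0 < Real.cos (R/2) := cos_half_pos hR ⟨hR.1.le, le_refl R⟩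
  have hs : 0 < Real.sin (R/2) := Real.sin_pos_of_pos_of_lt_pi (by linarith [hR.1]) (by linarith [hR.2, Real.pi_pos])
  have ht : 0 < Real.tan (R/2) := by rw [Real.tan_eq_sin_div_cos]; positivity
  have hJ : 0 < JA m (Real.tan (R/2)) := JA_pos m ht
  have hsqrt : Real.sqrt (1 + Real.tan (R/2)^2) = 1 / Real.cos (R/2) := by
    rw [← Real.inv_sqrt_one_add_tan_sq hc, one_div, inv_inv]
  have hsin : Real.sin R = 2 * Real.sin (R/2) * Real.cos (R/2) := by
    rw [← Real.sin_two_mul]; congr 1; ring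
  have hsc : Real.sin (R/2) = Real.tan (R/2) * Real.cos (R/2) := by
    rw [Real.tan_eq_sin_div_cos]; field_simp
  rw [integral_eq m hR]
  unfold HA
  rw [hsqrt, hsin, hsc]
  have htp : (0:ℝ) < Real.tan (R/2)^(2*m) := pow_pos ht _
  have hpow : Real.tan (R/2)^(2*m+2) = Real.tan (R/2)^(2*m) * Real.tan (R/2)^2 := by
    rw [← pow_add]
  rw [hpow]
  field_simp
  ring

theorem xi_sin_half_cubed_strictMono (m : ℕ) (hm : 1 ≤ m) :
    StrictMonoOn
      (fun R : ℝ =>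
        ((m : ℝ)^2 * Real.tan (R/2)^(2*m) /
          (Real.sin R * ∫ r in (0:ℝ)..R, Real.tan (r/2)^(2*m) * Real.sin r)) * Real.sin (R/2)^3)
      (Set.Ioo 0 π) := by
  intro R1 h1 R2 h2 h12
  simp only
  rw [f_eq m h1, f_eq m h2]
  have hmem1 : R1/2 ∈ Ioo (-(π/2)) (π/2) := ⟨by linarith [h1.1, Real.pi_pos], by linarith [h1.2]⟩
  have hmem2 : R2/2 ∈ Ioo (-(π/2)) (π/2) := ⟨by linarith [h2.1, Real.pi_pos], by linarith [h2.2]⟩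
  have htlt : Real.tan (R1/2) < Real.tan (R2/2) :=
    Real.strictMonoOn_tan hmem1 hmem2 (by linarith)
  have ht1 : 0 < Real.tan (R1/2) := Real.tan_pos_of_pos_of_lt_pi_div_two (by linarith [h1.1]) (by linarith [h1.2])
  have ht2 : 0 < Real.tan (R2/2) := Real.tan_pos_of_pos_of_lt_pi_div_two (by linarith [h2.1]) (by linarith [h2.2])
  have hH : HA m (Real.tan (R2/2)) < HA m (Real.tan (R1/2)) :=
    HA_strictAnti m ht1 ht2 htlt
  have hinv : 1 / HA m (Real.tan (R1/2)) < 1 / HA m (Real.tan (R2/2)) :=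
    one_div_lt_one_div_of_lt (HA_pos m ht2) hH
  have hm2 : (0:ℝ) < (m:ℝ)^2/8 := by
    have : (1:ℝ) ≤ (m:ℝ) := by exact_mod_cast hm
    positivity
  exact mul_lt_mul_of_pos_left hinv hm2
end

section
/- For each integer m ≥ 1 and R ∈ (0, π), define η_m(R) = (tan(R/2))^{2m} sin R / ∫₀^R (tan(r/2))^{2m} sin r dr. Then the function R ↦ η_m(R) · sin R is strictly decreasing on (0, π). -/
open Real Set

noncomputable def gF (m : ℕ) (r : ℝ) : ℝ := Real.tan (r/2)^(2*m) * Real.sin r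

noncomputable def GF (m : ℕ) (R : ℝ) : ℝ := ∫ r in (0:ℝ)..R, gF m r

noncomputable def NF (m : ℕ) (R : ℝ) : ℝ :=
  Real.tan (R/2)^(2*m) * Real.sin R * Real.sin R

noncomputable def KF (m : ℕ) (R : ℝ) : ℝ :=
  NF m R - (2*m + 2*Real.cos R) * GF m R

lemma cos_half_ne {r : ℝ} (h1 : -π < r) (h2 : r < π) : Real.cos (r/2) ≠ 0 := by
  apply ne_of_gt
  apply Real.cos_pos_of_mem_Ioo
  constructor <;> [linarith; linarith]

lemma gF_contAt (m : ℕ) {r : ℝ} (h1 : -π < r) (h2 : r < π) :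
    ContinuousAt (gF m) r := by
  have h := cos_half_ne h1 h2
  have ht : ContinuousAt (fun x : ℝ => Real.tan (x/2)) r := by
    have := (Real.continuousAt_tan.2 h).comp
      (g := Real.tan) (f := fun x : ℝ => x/2)
      ((continuous_id.div_const 2).continuousAt)
    exact this
  exact (ht.pow _).mul Real.continuous_sin.continuousAt

lemma NF_contAt (m : ℕ) {r : ℝ} (h1 : -π < r) (h2 : r < π) :
    ContinuousAt (NF m) r :=
  (gF_contAt m h1 h2).mul Real.continuous_sin.continuousAt

lemma gF_pos (m : ℕ) {r : ℝ} (h1 : 0 < r) (h2 : r < π) : 0 < gF m r := by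
  have hs : 0 < Real.sin r := Real.sin_pos_of_pos_of_lt_pi h1 h2
  have ht : 0 < Real.tan (r/2) :=
    Real.tan_pos_of_pos_of_lt_pi_div_two (by linarith) (by linarith)
  exact mul_pos (pow_pos ht _) hs

lemma gF_intble (m : ℕ) {x : ℝ} (h1 : 0 ≤ x) (h2 : x < π) :
    IntervalIntegrable (gF m) MeasureTheory.volume 0 x := by
  apply ContinuousOn.intervalIntegrable
  intro y hy
  rw [uIcc_of_le h1] at hy
  exact (gF_contAt m (by have := Real.pi_pos; cases hy; linarith)
    (lt_of_le_of_lt hy.2 h2)).continuousWithinAt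

lemma GF_pos (m : ℕ) {R : ℝ} (h1 : 0 < R) (h2 : R < π) : 0 < GF m R := by
  apply intervalIntegral.intervalIntegral_pos_of_pos_on (gF_intble m h1.le h2)
    _ h1
  intro x hx
  exact gF_pos m hx.1 (hx.2.trans h2)

lemma GF_hasDeriv (m : ℕ) {R : ℝ} (h1 : 0 ≤ R) (h2 : R < π) :
    HasDerivAt (GF m) (gF m R) R := by
  have hopen : IsOpen (Ioo (-π) π) := isOpen_Ioo
  have hmem : R ∈ Ioo (-π) π := ⟨by have := Real.pi_pos; linarith, h2⟩
  exact intervalIntegral.integral_hasDerivAt_right (gF_intble m h1 h2)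
    (ContinuousAt.stronglyMeasurableAtFilter hopen
      (fun x hx => gF_contAt m hx.1 hx.2) R hmem)
    (gF_contAt m hmem.1 hmem.2)

lemma tan_half_pow_hasDeriv (m : ℕ) (hm : 1 ≤ m) {R : ℝ} (h1 : 0 < R)
    (h2 : R < π) :
    HasDerivAt (fun x : ℝ => Real.tan (x/2)^(2*m))
      (2*m * Real.tan (R/2)^(2*m) / Real.sin R) R := by
  have hc : Real.cos (R/2) ≠ 0 := cos_half_ne (by linarith [Real.pi_pos]) h2
  have hs : 0 < Real.sin (R/2) :=
    Real.sin_pos_of_pos_of_lt_pi (by linarith) (by linarith [Real.pi_pos])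
  have ht : HasDerivAt (fun x : ℝ => Real.tan (x/2))
      (1/Real.cos (R/2)^2 * (1/2)) R := by
    have := (Real.hasDerivAt_tan hc).comp R ((hasDerivAt_id' R).div_const 2)
    exact this
  have hp := ht.pow (2*m)
  refine hp.congr_deriv ?_
  have hsinR : Real.sin R = 2 * Real.sin (R/2) * Real.cos (R/2) := by
    have := Real.sin_two_mul (R/2)
    rw [show 2*(R/2) = R by ring] at this
    rw [this]
  have hpow : Real.tan (R/2)^(2*m) = Real.tan (R/2)^(2*m-1) * Real.tan (R/2) := by
    rw [← pow_succ]; congr 1; omega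
  rw [hpow, hsinR, Real.tan_eq_sin_div_cos]
  have hs' : Real.sin (R/2) ≠ 0 := ne_of_gt hs
  field_simp
  push_cast
  ring

lemma NF_hasDeriv (m : ℕ) (hm : 1 ≤ m) {R : ℝ} (h1 : 0 < R) (h2 : R < π) :
    HasDerivAt (NF m) (gF m R * (2*m + 2*Real.cos R)) R := by
  have hsin : Real.sin R ≠ 0 :=
    ne_of_gt (Real.sin_pos_of_pos_of_lt_pi h1 h2)
  have h := ((tan_half_pow_hasDeriv m hm h1 h2).mul
      (Real.hasDerivAt_sin R)).mul (Real.hasDerivAt_sin R)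
  refine h.congr_deriv ?_
  unfold gF
  simp only [Pi.mul_apply]
  field_simp
  ring

lemma KF_hasDeriv (m : ℕ) (hm : 1 ≤ m) {R : ℝ} (h1 : 0 < R) (h2 : R < π) :
    HasDerivAt (KF m) (2 * Real.sin R * GF m R) R := by
  have h := (NF_hasDeriv m hm h1 h2).sub
    ((((Real.hasDerivAt_cos R).const_mul 2).const_add (2*(m:ℝ))).mul
      (GF_hasDeriv m h1.le h2))
  refine h.congr_deriv ?_
  ring

lemma KF_pos (m : ℕ) (hm : 1 ≤ m) {R : ℝ} (h1 : 0 < R) (h2 : R < π) :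
    0 < KF m R := by
  have key : StrictMonoOn (KF m) (Icc 0 R) := by
    apply strictMonoOn_of_deriv_pos (convex_Icc 0 R)
    · intro x hx
      have hx1 : (0:ℝ) ≤ x := hx.1
      have hx2 : x < π := lt_of_le_of_lt hx.2 h2
      have hπ := Real.pi_pos
      apply ContinuousAt.continuousWithinAt
      exact ((NF_contAt m (by linarith) hx2).sub
        (((Real.continuous_cos.continuousAt.const_mul 2).const_add
          (2*(m:ℝ))).mul (GF_hasDeriv m hx1 hx2).continuousAt))
    · intro x hx
      rw [interior_Icc] at hx
      have hx2 : x < π := hx.2.trans h2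
      rw [(KF_hasDeriv m hm hx.1 hx2).deriv]
      have := GF_pos m hx.1 hx2
      have := Real.sin_pos_of_pos_of_lt_pi hx.1 hx2
      positivity
  have h0 : KF m 0 = 0 := by
    unfold KF NF GF
    simp [Real.sin_zero, intervalIntegral.integral_same]
  have := key (left_mem_Icc.2 h1.le) (right_mem_Icc.2 h1.le) h1
  rwa [h0] at this

theorem eta_sin_strictAnti (m : ℕ) (hm : 1 ≤ m) :
    StrictAntiOn
      (fun R : ℝ =>
        (Real.tan (R/2)^(2*m) * Real.sin R /
          ∫ r in (0:ℝ)..R, Real.tan (r/2)^(2*m) * Real.sin r) * Real.sin R)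
      (Set.Ioo 0 π) := by
  have hfe : ∀ R : ℝ,
      (Real.tan (R/2)^(2*m) * Real.sin R /
        ∫ r in (0:ℝ)..R, Real.tan (r/2)^(2*m) * Real.sin r) * Real.sin R
      = NF m R / GF m R := by
    intro R
    unfold NF GF gF
    ring
  simp only [hfe]
  have hD : ∀ x ∈ Ioo (0:ℝ) π,
      HasDerivAt (fun R => NF m R / GF m R)
        (-(gF m x * KF m x) / (GF m x)^2) x := by
    intro x hx
    have hG := GF_pos m hx.1 hx.2
    have h := (NF_hasDeriv m hm hx.1 hx.2).div
      (GF_hasDeriv m hx.1.le hx.2) (ne_of_gt hG)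
    refine h.congr_deriv ?_
    unfold KF
    ring
  apply strictAntiOn_of_deriv_neg (convex_Ioo 0 π)
  · intro x hx
    exact (hD x hx).continuousAt.continuousWithinAt
  · intro x hx
    rw [interior_Ioo] at hx
    rw [(hD x hx).deriv]
    have hG := GF_pos m hx.1 hx.2
    have hg := gF_pos m hx.1 hx.2
    have hK := KF_pos m hm hx.1 hx.2
    have : 0 < gF m x * KF m x := mul_pos hg hK
    exact div_neg_of_neg_of_pos (by linarith) (by positivity)
end

section
/- For each integer m ≥ 1 and R ∈ (0, π), define η_m(R) = (tan(R/2))^{2m} sin R / ∫₀^R (tan(r/2))^{2m} sin r dr. Then the function R ↦ η_m(R) · R is strictly increasing on (0, π). -/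
open Real Set intervalIntegral MeasureTheory

namespace EtaAux

noncomputable def f (m : ℕ) (r : ℝ) : ℝ := Real.tan (r/2) ^ (2*m) * Real.sin r

noncomputable def f' (m : ℕ) (r : ℝ) : ℝ :=
  ((2*m : ℕ) : ℝ) * Real.tan (r/2) ^ (2*m - 1) * (1 / Real.cos (r/2) ^ 2 * (2⁻¹)) * Real.sin r
    + Real.tan (r/2) ^ (2*m) * Real.cos r

lemma cos_half_ne {r : ℝ} (hr : r ∈ Ioo (-π) π) : Real.cos (r/2) ≠ 0 := by
  have : r/2 ∈ Ioo (-(π/2)) (π/2) := ⟨by linarith [hr.1], by linarith [hr.2]⟩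
  exact (Real.cos_pos_of_mem_Ioo this).ne'

lemma hasDerivAt_f (m : ℕ) {r : ℝ} (hr : r ∈ Ioo (-π) π) :
    HasDerivAt (f m) (f' m r) r := by
  have hc := cos_half_ne hr
  have h1 : HasDerivAt (fun x : ℝ => Real.tan (x/2)) (1 / Real.cos (r/2) ^ 2 * 2⁻¹) r := by
    have := (Real.hasDerivAt_tan hc).comp r ((hasDerivAt_id r).div_const 2)
    simpa [Function.comp_def] using this
  exact ((h1.pow (2*m)).mul (Real.hasDerivAt_sin r)).congr_deriv (by unfold f'; simp only [Pi.pow_apply])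

end EtaAux

namespace EtaAux

lemma mem_sub {r : ℝ} (hr : r ∈ Ioo 0 π) : r ∈ Ioo (-π) π :=
  ⟨by linarith [hr.1, Real.pi_pos], hr.2⟩

lemma sin_pos' {r : ℝ} (hr : r ∈ Ioo 0 π) : 0 < Real.sin r :=
  Real.sin_pos_of_pos_of_lt_pi hr.1 hr.2

lemma tan_half_pos {r : ℝ} (hr : r ∈ Ioo 0 π) : 0 < Real.tan (r/2) :=
  Real.tan_pos_of_pos_of_lt_pi_div_two (by linarith [hr.1]) (by linarith [hr.2])

lemma f_pos (m : ℕ) {r : ℝ} (hr : r ∈ Ioo 0 π) : 0 < f m r :=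
  mul_pos (pow_pos (tan_half_pos hr) _) (sin_pos' hr)

lemma f'_eq (m : ℕ) (hm : 1 ≤ m) {r : ℝ} (hr : r ∈ Ioo 0 π) :
    f' m r = f m r * ((2*m + Real.cos r) / Real.sin r) := by
  have hc : Real.cos (r/2) ≠ 0 := cos_half_ne (mem_sub hr)
  have hs : Real.sin r ≠ 0 := (sin_pos' hr).ne'
  have hsin : Real.sin r = 2 * Real.sin (r/2) * Real.cos (r/2) := by
    rw [show r = 2*(r/2) by ring, Real.sin_two_mul]; ring_nf
  obtain ⟨k, hk⟩ : ∃ k, 2*m = k + 1 := ⟨2*m - 1, by omega⟩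
  have htan : Real.tan (r/2) = Real.sin (r/2) / Real.cos (r/2) := Real.tan_eq_sin_div_cos _
  unfold f f'
  rw [hk]
  simp only [Nat.add_sub_cancel, htan, pow_succ]
  rw [hsin]
  have hkk : 2*(m:ℝ) = (k:ℝ) + 1 := by exact_mod_cast congrArg (Nat.cast : ℕ → ℝ) hk
  rw [hkk]
  have hs2 : Real.sin (r/2) ≠ 0 :=
    (Real.sin_pos_of_pos_of_lt_pi (by linarith [hr.1]) (by linarith [hr.2, Real.pi_pos])).ne'
  push_cast
  field_simp

end EtaAux

namespace EtaAux

lemma contOn_f (m : ℕ) : ContinuousOn (f m) (Ioo (-π) π) := fun r hr =>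
  (hasDerivAt_f m hr).continuousAt.continuousWithinAt

lemma contOn_f' (m : ℕ) : ContinuousOn (f' m) (Ioo (-π) π) := by
  intro r hr
  have hc := cos_half_ne hr
  have h1 : ContinuousAt (fun x : ℝ => Real.tan (x/2)) r := by
    have h0 : ContinuousAt (fun x : ℝ => x/2) r := continuousAt_id.div_const 2
    have := ContinuousAt.comp (f := fun x : ℝ => x/2) (Real.continuousAt_tan.2 hc) h0
    simpa [Function.comp_def] using this
  have h2 : ContinuousAt (fun x : ℝ => Real.cos (x/2)) r :=
    (Real.continuous_cos.comp (continuous_id.div_const 2)).continuousAt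
  apply ContinuousAt.continuousWithinAt
  unfold f'
  exact (((continuousAt_const.mul (h1.pow _)).mul
      (((continuousAt_const.div (h2.pow 2) (pow_ne_zero _ hc)).mul continuousAt_const))).mul
      Real.continuous_sin.continuousAt).add ((h1.pow _).mul Real.continuous_cos.continuousAt)

lemma Icc_sub {R : ℝ} (hR : R ∈ Ioo 0 π) : uIcc (0:ℝ) R ⊆ Ioo (-π) π := by
  rw [uIcc_of_le hR.1.le]
  intro x hx
  exact ⟨by linarith [hx.1, Real.pi_pos], lt_of_le_of_lt hx.2 hR.2⟩

lemma intble_f (m : ℕ) {R : ℝ} (hR : R ∈ Ioo 0 π) : IntervalIntegrable (f m) volume 0 R :=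
  ((contOn_f m).mono (Icc_sub hR)).intervalIntegrable

lemma hasDerivAt_F (m : ℕ) {R : ℝ} (hR : R ∈ Ioo 0 π) :
    HasDerivAt (fun u => ∫ r in (0:ℝ)..u, f m r) (f m R) R := by
  refine intervalIntegral.integral_hasDerivAt_right (intble_f m hR)
    (((contOn_f m).stronglyMeasurableAtFilter isOpen_Ioo) R (mem_sub hR))
    ((contOn_f m).continuousAt (isOpen_Ioo.mem_nhds (mem_sub hR)))

lemma F_pos (m : ℕ) {R : ℝ} (hR : R ∈ Ioo 0 π) :
    0 < ∫ r in (0:ℝ)..R, f m r := by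
  refine intervalIntegral.intervalIntegral_pos_of_pos_on (intble_f m hR) (fun x hx => ?_) hR.1
  exact f_pos m ⟨hx.1, hx.2.trans hR.2⟩

end EtaAux

namespace EtaAux

noncomputable def lam (r : ℝ) : ℝ := Real.sin r - r * Real.cos r

lemma hasDerivAt_lam (r : ℝ) : HasDerivAt lam (r * Real.sin r) r := by
  have := (Real.hasDerivAt_sin r).sub ((hasDerivAt_id r).mul (Real.hasDerivAt_cos r))
  simp only [id_eq] at this
  exact this.congr_deriv (by ring)

lemma lam_pos {r : ℝ} (hr : r ∈ Ioo 0 π) : 0 < lam r := by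
  have hmono : StrictMonoOn lam (Icc 0 π) := by
    refine strictMonoOn_of_deriv_pos (convex_Icc _ _)
      (fun x _ => (hasDerivAt_lam x).continuousAt.continuousWithinAt) (fun x hx => ?_)
    rw [interior_Icc] at hx
    rw [(hasDerivAt_lam x).deriv]
    exact mul_pos hx.1 (sin_pos' hx)
  have := hmono (left_mem_Icc.2 Real.pi_pos.le) ⟨hr.1.le, hr.2.le⟩ hr.1
  simpa [lam] using this

noncomputable def psi (r : ℝ) : ℝ :=
  2 * Real.sin r - 2 * (r * Real.cos r) + Real.sin r * Real.cos r - r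

lemma hasDerivAt_psi (r : ℝ) :
    HasDerivAt psi (2 * Real.sin r * (r - Real.sin r)) r := by
  unfold psi
  have := (((Real.hasDerivAt_sin r).const_mul 2).sub
      (((hasDerivAt_id r).mul (Real.hasDerivAt_cos r)).const_mul 2)).add
      ((Real.hasDerivAt_sin r).mul (Real.hasDerivAt_cos r)) |>.sub (hasDerivAt_id r)
  simp only [id_eq] at this
  exact this.congr_deriv (by nlinarith [Real.sin_sq_add_cos_sq r])

lemma psi_pos {r : ℝ} (hr : r ∈ Ioo 0 π) : 0 < psi r := by
  have hmono : StrictMonoOn psi (Icc 0 π) := by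
    refine strictMonoOn_of_deriv_pos (convex_Icc _ _)
      (fun x _ => (hasDerivAt_psi x).continuousAt.continuousWithinAt) (fun x hx => ?_)
    rw [interior_Icc] at hx
    rw [(hasDerivAt_psi x).deriv]
    have := Real.sin_lt hx.1
    have := sin_pos' hx
    nlinarith
  have := hmono (left_mem_Icc.2 Real.pi_pos.le) ⟨hr.1.le, hr.2.le⟩ hr.1
  simpa [psi] using this

end EtaAux

namespace EtaAux

noncomputable def phi (m : ℕ) (r : ℝ) : ℝ := r * (2*m + Real.cos r) / Real.sin r

lemma hasDerivAt_phi (m : ℕ) {r : ℝ} (hr : r ∈ Ioo 0 π) :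
    HasDerivAt (phi m)
      (((2*m + Real.cos r - r * Real.sin r) * Real.sin r
        - r * (2*m + Real.cos r) * Real.cos r) / Real.sin r ^ 2) r := by
  have hs : Real.sin r ≠ 0 := (sin_pos' hr).ne'
  have hu : HasDerivAt (fun x : ℝ => x * (2*m + Real.cos x))
      (2*m + Real.cos r - r * Real.sin r) r := by
    have := (hasDerivAt_id r).mul ((hasDerivAt_const r (2*(m:ℝ))).add (Real.hasDerivAt_cos r))
    simp only [id_eq] at this
    exact this.congr_deriv (by simp only [Pi.add_apply]; ring)
  exact hu.div (Real.hasDerivAt_sin r) hs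

lemma phi_strictMono (m : ℕ) (hm : 1 ≤ m) : StrictMonoOn (phi m) (Ioo 0 π) := by
  refine strictMonoOn_of_deriv_pos (convex_Ioo _ _)
    (fun x hx => (hasDerivAt_phi m hx).continuousAt.continuousWithinAt) (fun x hx => ?_)
  rw [interior_Ioo] at hx
  rw [(hasDerivAt_phi m hx).deriv]
  have hs := sin_pos' hx
  have hl := lam_pos hx
  have hp := psi_pos hx
  have hm' : (1:ℝ) ≤ (m:ℝ) := by exact_mod_cast hm
  apply div_pos _ (pow_pos hs 2)
  have : (2*m + Real.cos x - x * Real.sin x) * Real.sin x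
      - x * (2*m + Real.cos x) * Real.cos x
      = 2*(m:ℝ) * lam x + (Real.sin x * Real.cos x - x) := by
    unfold lam
    linear_combination (-x) * Real.sin_sq_add_cos_sq x
  rw [this]
  have hps : psi x = 2 * lam x + (Real.sin x * Real.cos x - x) := by unfold psi lam; ring
  nlinarith

end EtaAux

namespace EtaAux

lemma intble_g' (m : ℕ) {R : ℝ} (hR : R ∈ Ioo 0 π) :
    IntervalIntegrable (fun r => f m r + r * f' m r) volume 0 R := by
  apply ContinuousOn.intervalIntegrable
  apply ContinuousOn.add ((contOn_f m).mono (Icc_sub hR))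
  exact (continuousOn_id.mul ((contOn_f' m).mono (Icc_sub hR)))

lemma ftc2 (m : ℕ) {R : ℝ} (hR : R ∈ Ioo 0 π) :
    ∫ r in (0:ℝ)..R, (f m r + r * f' m r) = R * f m R := by
  have h : ∀ x ∈ uIcc (0:ℝ) R, HasDerivAt (fun r => r * f m r) (f m x + x * f' m x) x := by
    intro x hx
    have hx' : x ∈ Ioo (-π) π := Icc_sub hR hx
    have := (hasDerivAt_id x).mul (hasDerivAt_f m hx')
    simp only [id_eq] at this
    exact this.congr_deriv (by ring)
  have := intervalIntegral.integral_eq_sub_of_hasDerivAt h (intble_g' m hR)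
  rw [this]; ring

lemma key (m : ℕ) (hm : 1 ≤ m) {R : ℝ} (hR : R ∈ Ioo 0 π) :
    f m R ^ 2 * R < (∫ r in (0:ℝ)..R, f m r) * (f' m R * R + f m R) := by
  have hfR := f_pos m hR
  have hint : ∫ r in (0:ℝ)..R, (f m r + r * f' m r) < (phi m R + 1) * ∫ r in (0:ℝ)..R, f m r := by
    rw [← intervalIntegral.integral_const_mul]
    have hsub : 0 < ∫ r in (0:ℝ)..R, ((phi m R + 1) * f m r - (f m r + r * f' m r)) := by
      refine intervalIntegral.intervalIntegral_pos_of_pos_on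
        (((intble_f m hR).const_mul _).sub (intble_g' m hR)) (fun x hx => ?_) hR.1
      have hx' : x ∈ Ioo 0 π := ⟨hx.1, hx.2.trans hR.2⟩
      have hfx := f_pos m hx'
      have hphi : phi m x < phi m R := phi_strictMono m hm hx' hR hx.2
      have hfe : f m x + x * f' m x = (phi m x + 1) * f m x := by
        rw [f'_eq m hm hx']
        unfold phi
        have hs : Real.sin x ≠ 0 := (sin_pos' hx').ne'
        field_simp
        ring
      rw [hfe]
      nlinarith
    rw [intervalIntegral.integral_sub ((intble_f m hR).const_mul (phi m R + 1)) (intble_g' m hR)] at hsub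
    linarith
  rw [ftc2 m hR] at hint
  have hkey : f' m R * R + f m R = (phi m R + 1) * f m R := by
    rw [f'_eq m hm hR]
    unfold phi
    have hs : Real.sin R ≠ 0 := (sin_pos' hR).ne'
    field_simp
  rw [hkey]
  calc f m R ^ 2 * R = f m R * (R * f m R) := by ring
    _ < f m R * ((phi m R + 1) * ∫ r in (0:ℝ)..R, f m r) := by
        exact mul_lt_mul_of_pos_left hint hfR
    _ = (∫ r in (0:ℝ)..R, f m r) * ((phi m R + 1) * f m R) := by ring

lemma hasDerivAt_g (m : ℕ) {R : ℝ} (hR : R ∈ Ioo 0 π) :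
    HasDerivAt (fun u : ℝ => f m u / (∫ r in (0:ℝ)..u, f m r) * u)
      ((f' m R * (∫ r in (0:ℝ)..R, f m r) - f m R * f m R) / (∫ r in (0:ℝ)..R, f m r) ^ 2 * R
        + f m R / (∫ r in (0:ℝ)..R, f m r)) R := by
  have h1 := (hasDerivAt_f m (mem_sub hR)).div (hasDerivAt_F m hR) (F_pos m hR).ne'
  have := h1.mul (hasDerivAt_id R)
  simp only [id_eq] at this
  exact this.congr_deriv (by simp only [Pi.div_apply]; ring)

end EtaAux

open EtaAux in
theorem eta_R_strictMono (m : ℕ) (hm : 1 ≤ m) :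
    StrictMonoOn
      (fun R : ℝ =>
        (Real.tan (R/2)^(2*m) * Real.sin R /
          ∫ r in (0:ℝ)..R, Real.tan (r/2)^(2*m) * Real.sin r) * R)
      (Set.Ioo 0 π) := by
  show StrictMonoOn (fun R : ℝ => f m R / (∫ r in (0:ℝ)..R, f m r) * R) (Set.Ioo 0 π)
  refine strictMonoOn_of_deriv_pos (convex_Ioo _ _)
    (fun x hx => (hasDerivAt_g m hx).continuousAt.continuousWithinAt) (fun x hx => ?_)
  rw [interior_Ioo] at hx
  rw [(hasDerivAt_g m hx).deriv]
  have hF := F_pos m hx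
  have hk := key m hm hx
  have heq : (f' m x * (∫ r in (0:ℝ)..x, f m r) - f m x * f m x) / (∫ r in (0:ℝ)..x, f m r) ^ 2 * x
        + f m x / (∫ r in (0:ℝ)..x, f m r)
      = ((∫ r in (0:ℝ)..x, f m r) * (f' m x * x + f m x) - f m x ^ 2 * x)
        / (∫ r in (0:ℝ)..x, f m r) ^ 2 := by
    field_simp
    ring
  rw [heq]
  exact div_pos (by linarith) (pow_pos hF 2)
end

section
/- For each integer m ≥ 2 and R ∈ (0, π), define η_m(R) = (tan(R/2))^{2m} sin R / ∫₀^R (tan(r/2))^{2m} sin r dr. Then the function R ↦ η_m(R) · sin(R/2) is strictly increasing on (0, π). -/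
open Real Set intervalIntegral MeasureTheory

namespace EtaAux

noncomputable def g (m : ℕ) (r : ℝ) : ℝ := Real.tan (r/2)^(2*m) * Real.sin r

noncomputable def q (m : ℕ) (r : ℝ) : ℝ :=
  ((2*m - 1 : ℝ) + 3 * Real.cos (r/2)^2) / (2 * Real.cos (r/2))

lemma cos_half_pos {r : ℝ} (h0 : -π < r) (h1 : r < π) : 0 < Real.cos (r/2) := by
  refine Real.cos_pos_of_mem_Ioo ⟨by linarith [Real.pi_pos], by linarith [Real.pi_pos]⟩

lemma g_contAt (m : ℕ) {r : ℝ} (h0 : -π < r) (h1 : r < π) : ContinuousAt (g m) r := by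
  have hc : Real.cos (r/2) ≠ 0 := (cos_half_pos h0 h1).ne'
  have ht : ContinuousAt Real.tan (r/2) := Real.continuousAt_tan.mpr hc
  have h2 : ContinuousAt (fun x : ℝ => x/2) r := continuousAt_id.div_const 2
  have ht2 : ContinuousAt (fun x : ℝ => Real.tan (x/2)) r :=
    ContinuousAt.comp (f := fun x : ℝ => x/2) ht h2
  exact (ht2.pow _).mul Real.continuous_sin.continuousAt

lemma g_contOn (m : ℕ) : ContinuousOn (g m) (Ioo (-π) π) :=
  fun x hx => (g_contAt m hx.1 hx.2).continuousWithinAt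

lemma q_contAt (m : ℕ) {r : ℝ} (h0 : -π < r) (h1 : r < π) : ContinuousAt (q m) r := by
  have hc : Real.cos (r/2) ≠ 0 := (cos_half_pos h0 h1).ne'
  have h2 : ContinuousAt (fun x : ℝ => Real.cos (x/2)) r :=
    Real.continuous_cos.continuousAt.comp (continuousAt_id.div_const 2)
  exact (continuousAt_const.add ((h2.pow 2).const_mul 3)).div (h2.const_mul 2)
    (by simpa using (mul_ne_zero two_ne_zero hc))

lemma g_pos (m : ℕ) {r : ℝ} (h0 : 0 < r) (h1 : r < π) : 0 < g m r := by
  have ht : 0 < Real.tan (r/2) :=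
    Real.tan_pos_of_pos_of_lt_pi_div_two (by linarith) (by linarith)
  exact mul_pos (pow_pos ht _) (Real.sin_pos_of_pos_of_lt_pi h0 h1)

lemma g_nonneg (m : ℕ) {r : ℝ} (h0 : 0 ≤ r) (h1 : r < π) : 0 ≤ g m r := by
  rcases eq_or_lt_of_le h0 with h | h
  · simp [g, ← h]
  · exact (g_pos m h h1).le

lemma q_lt (m : ℕ) (hm : 2 ≤ m) {a b : ℝ} (ha : 0 ≤ a) (hab : a < b) (hb : b < π) :
    q m a < q m b := by
  have hc1 : 0 < Real.cos (a/2) := cos_half_pos (by linarith [Real.pi_pos]) (by linarith)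
  have hc2 : 0 < Real.cos (b/2) := cos_half_pos (by linarith [Real.pi_pos]) hb
  have hlt : Real.cos (b/2) < Real.cos (a/2) :=
    Real.cos_lt_cos_of_nonneg_of_le_pi (by linarith) (by linarith) (by linarith)
  have hle1 : Real.cos (a/2) ≤ 1 := Real.cos_le_one _
  have hm' : (3:ℝ) ≤ 2*m - 1 := by
    have : (2:ℝ) ≤ m := by exact_mod_cast hm
    linarith
  have h12 : Real.cos (a/2) * Real.cos (b/2) < 1 := by nlinarith
  have hkey : 0 < (Real.cos (a/2) - Real.cos (b/2)) *
      ((2*m - 1 : ℝ) - 3 * (Real.cos (a/2) * Real.cos (b/2))) := by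
    apply mul_pos (by linarith)
    nlinarith
  rw [q, q, div_lt_div_iff₀ (by linarith) (by linarith)]
  nlinarith

lemma w_hasDeriv (m : ℕ) (hm : 1 ≤ m) {R : ℝ} (h0 : -π < R) (h1 : R < π) :
    HasDerivAt (fun r => g m r * Real.sin (r/2)) (q m R * g m R) R := by
  have hcpos : 0 < Real.cos (R/2) := cos_half_pos h0 h1
  have hc : Real.cos (R/2) ≠ 0 := hcpos.ne'
  have hhalf : HasDerivAt (fun r : ℝ => r/2) (1/2) R := by
    simpa using (hasDerivAt_id R).div_const 2
  have htan : HasDerivAt (fun r => Real.tan (r/2)) (1 / Real.cos (R/2)^2 * (1/2)) R :=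
    by have := (Real.hasDerivAt_tan hc).comp R hhalf; exact this
  have hpow := htan.pow (2*m)
  have hsinh : HasDerivAt (fun r => Real.sin (r/2)) (Real.cos (R/2) * (1/2)) R :=
    by have := (Real.hasDerivAt_sin (R/2)).comp R hhalf; exact this
  have hprod := (Real.hasDerivAt_sin R).mul hsinh
  have hw := hpow.mul hprod
  have hfun : (fun r => g m r * Real.sin (r/2)) =
      fun r => Real.tan (r/2)^(2*m) * (Real.sin r * Real.sin (r/2)) := by
    funext r; simp [g, mul_assoc]
  rw [hfun]
  convert hw using 1
  · rfl
  · rfl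
  · rfl
  simp only [Pi.mul_apply, Pi.pow_apply]
  have hsR : Real.sin R = 2 * Real.sin (R/2) * Real.cos (R/2) := by
    rw [← Real.sin_two_mul]; ring_nf
  have hcR : Real.cos R = 2 * Real.cos (R/2)^2 - 1 := by
    rw [← Real.cos_two_mul]; ring_nf
  obtain ⟨n, hn⟩ : ∃ n, 2*m = n + 1 := ⟨2*m - 1, by omega⟩
  have hn' : 2*m - 1 = n := by omega
  have hq : (2*(m:ℝ) - 1) = (n:ℝ) := by
    have h := congrArg (Nat.cast : ℕ → ℝ) hn
    push_cast at h
    linarith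
  rw [q, g, Real.tan_eq_sin_div_cos, hsR, hcR, hn, hq]
  simp only [Nat.add_sub_cancel, pow_succ]
  push_cast
  field_simp
  ring

lemma key_s5 (m : ℕ) (hm : 2 ≤ m) {R : ℝ} (h0 : 0 < R) (h1 : R < π) :
    g m R * Real.sin (R/2) < q m R * ∫ r in (0:ℝ)..R, g m r := by
  have hsub : Icc (0:ℝ) R ⊆ Ioo (-π) π := fun x hx =>
    ⟨by linarith [Real.pi_pos, hx.1], lt_of_le_of_lt hx.2 h1⟩
  have hcg : ContinuousOn (g m) (Icc 0 R) := (g_contOn m).mono hsub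
  have hcqg : ContinuousOn (fun r => q m r * g m r) (Icc 0 R) := fun x hx =>
    (((q_contAt m (hsub hx).1 (hsub hx).2).mul
      (g_contAt m (hsub hx).1 (hsub hx).2)).continuousWithinAt)
  have hcRg : ContinuousOn (fun r => q m R * g m r) (Icc 0 R) :=
    continuousOn_const.mul hcg
  -- FTC2 : w R = ∫ q g
  have hftc : (∫ r in (0:ℝ)..R, q m r * g m r) =
      g m R * Real.sin (R/2) - g m 0 * Real.sin (0/2) := by
    apply intervalIntegral.integral_eq_sub_of_hasDerivAt
    · intro x hx
      rw [uIcc_of_le h0.le] at hx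
      exact w_hasDeriv m (by omega) (hsub hx).1 (hsub hx).2
    · exact hcqg.intervalIntegrable_of_Icc h0.le
  have hw0 : g m 0 * Real.sin (0/2) = 0 := by simp [g]
  rw [hw0, sub_zero] at hftc
  rw [← hftc, ← intervalIntegral.integral_const_mul]
  apply intervalIntegral.integral_lt_integral_of_continuousOn_of_le_of_exists_lt h0 hcqg hcRg
  · intro x hx
    have hg0 : 0 ≤ g m x := g_nonneg m hx.1.le (lt_of_le_of_lt hx.2 h1)
    rcases eq_or_lt_of_le hx.2 with h | h
    · rw [h]
    · exact mul_le_mul_of_nonneg_right (q_lt m hm hx.1.le h h1).le hg0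
  · refine ⟨R/2, ⟨by linarith, by linarith⟩, ?_⟩
    have := q_lt m hm (by linarith : (0:ℝ) ≤ R/2) (by linarith : R/2 < R) h1
    exact mul_lt_mul_of_pos_right this (g_pos m (by linarith) (by linarith))

end EtaAux

open EtaAux

theorem eta_sin_half_strictMono (m : ℕ) (hm : 2 ≤ m) :
    StrictMonoOn
      (fun R : ℝ =>
        (Real.tan (R/2)^(2*m) * Real.sin R /
          ∫ r in (0:ℝ)..R, Real.tan (r/2)^(2*m) * Real.sin r) * Real.sin (R/2))
      (Set.Ioo 0 π) := by
  have hfun : (fun R : ℝ =>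
        (Real.tan (R/2)^(2*m) * Real.sin R /
          ∫ r in (0:ℝ)..R, Real.tan (r/2)^(2*m) * Real.sin r) * Real.sin (R/2)) =
      fun R : ℝ => g m R * Real.sin (R/2) / ∫ r in (0:ℝ)..R, g m r := by
    funext R
    rw [div_mul_eq_mul_div]
    rfl
  rw [hfun]
  -- derivative facts
  have hD : ∀ R ∈ Ioo (0:ℝ) π,
      HasDerivAt (fun R : ℝ => g m R * Real.sin (R/2) / ∫ r in (0:ℝ)..R, g m r)
        ((q m R * g m R * (∫ r in (0:ℝ)..R, g m r) -
          g m R * Real.sin (R/2) * g m R) / (∫ r in (0:ℝ)..R, g m r)^2) R := by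
    intro R hR
    have h0 := hR.1
    have h1 := hR.2
    have hmem : R ∈ Ioo (-π) π := ⟨by linarith [Real.pi_pos], h1⟩
    have hint : IntervalIntegrable (g m) volume 0 R := by
      apply (g_contOn m).mono ?_ |>.intervalIntegrable
      rw [uIcc_of_le h0.le]
      exact fun x hx => ⟨by linarith [Real.pi_pos, hx.1], lt_of_le_of_lt hx.2 h1⟩
    have hF : HasDerivAt (fun u => ∫ r in (0:ℝ)..u, g m r) (g m R) R :=
      intervalIntegral.integral_hasDerivAt_right hint
        (ContinuousOn.stronglyMeasurableAtFilter isOpen_Ioo (g_contOn m) R hmem)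
        (g_contAt m hmem.1 hmem.2)
    have hFpos : 0 < ∫ r in (0:ℝ)..R, g m r :=
      intervalIntegral.intervalIntegral_pos_of_pos_on hint
        (fun x hx => g_pos m hx.1 (lt_trans hx.2 h1)) h0
    exact (w_hasDeriv m (by omega) hmem.1 hmem.2).div hF hFpos.ne'
  apply strictMonoOn_of_deriv_pos (convex_Ioo 0 π)
  · exact fun x hx => ((hD x hx).continuousAt).continuousWithinAt
  · intro R hR
    rw [interior_Ioo] at hR
    rw [(hD R hR).deriv]
    have h0 := hR.1
    have h1 := hR.2
    have hint : IntervalIntegrable (g m) volume 0 R := by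
      apply (g_contOn m).mono ?_ |>.intervalIntegrable
      rw [uIcc_of_le h0.le]
      exact fun x hx => ⟨by linarith [Real.pi_pos, hx.1], lt_of_le_of_lt hx.2 h1⟩
    have hFpos : 0 < ∫ r in (0:ℝ)..R, g m r :=
      intervalIntegral.intervalIntegral_pos_of_pos_on hint
        (fun x hx => g_pos m hx.1 (lt_trans hx.2 h1)) h0
    have hkey := key_s5 m hm h0 h1
    have hgpos := g_pos m h0 h1
    apply div_pos _ (pow_pos hFpos 2)
    nlinarith
end

section
/- For R ∈ (0, π) and m ≥ 1, define ξ_m(R) = m² (tan(R/2))^{2m} / ( sin R · ∫₀^R (tan(r/2))^{2m} sin r dr ). Then for all R ∈ (0, π), m²(m+1)/(4 sin³(R/2)) < ξ_m(R) < 2m²(m+1)/sin³R. -/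
open Real Set

namespace XiB

noncomputable def f (m : ℕ) (r : ℝ) : ℝ := Real.tan (r/2)^(2*m) * Real.sin r

noncomputable def F (m : ℕ) (r : ℝ) : ℝ := Real.tan (r/2)^(2*m) * Real.sin r^2

noncomputable def D1 (m : ℕ) (r : ℝ) : ℝ :=
  (2*(m:ℝ)) * Real.tan (r/2)^(2*m-1) * (1 / Real.cos (r/2)^2 * (1/2)) * Real.sin r^2
    + Real.tan (r/2)^(2*m) * (2 * Real.sin r * Real.cos r)

noncomputable def G (m : ℕ) (r : ℝ) : ℝ :=
  2 * Real.sin (r/2)^(2*m+2) / Real.cos (r/2)^(2*m+1)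

noncomputable def D2 (m : ℕ) (r : ℝ) : ℝ :=
  ((2*(m:ℝ)+2) * Real.sin (r/2)^(2*m+1) * Real.cos (r/2) * Real.cos (r/2)^(2*m+1)
    + (2*(m:ℝ)+1) * Real.sin (r/2)^(2*m+3) * Real.cos (r/2)^(2*m))
    / (Real.cos (r/2)^(2*m+1))^2

lemma algA (M s c : ℝ) (k : ℕ) (hs : 0 < s) (hc : 0 < c) (hpy : s^2+c^2=1) :
    (2*M) * (s/c)^(k+1-1) * (1 / c^2 * (1/2)) * (2*s*c)^2
      + (s/c)^(k+1) * (2*(2*s*c)*(2*c^2-1))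
    < 2*(M+1) * ((s/c)^(k+1) * (2*s*c)) := by
  simp only [Nat.add_sub_cancel]
  have hc' : c ≠ 0 := hc.ne'
  have eL : (2*M) * (s/c)^k * (1 / c^2 * (1/2)) * (2*s*c)^2
      + (s/c)^(k+1) * (2*(2*s*c)*(2*c^2-1))
      = (s/c)^k * (4*M*s^2 + 4*s^2*(2*c^2-1)) := by
    have e : (2*M)*(1/c^2*(1/2))*(2*s*c)^2 + (s/c)*(2*(2*s*c)*(2*c^2-1))
        = 4*M*s^2 + 4*s^2*(2*c^2-1) := by field_simp; ring
    rw [← e]; ring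
  have eR : 2*(M+1) * ((s/c)^(k+1) * (2*s*c)) = (s/c)^k * (4*(M+1)*s^2) := by
    rw [pow_succ]; field_simp; ring
  rw [eL, eR]
  have hP : 0 < (s/c)^k := pow_pos (div_pos hs hc) k
  have h4 : c^2 < 1 := by nlinarith
  have h5 : 4*M*s^2 + 4*s^2*(2*c^2-1) < 4*(M+1)*s^2 := by nlinarith
  exact mul_lt_mul_of_pos_left h5 hP

lemma algB (M s c A B : ℝ) (hM : 0 ≤ M) (hs : 0 < s) (hc : 0 < c) (hc1 : c < 1)
    (hA : 0 < A) (hB : 0 < B) :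
    (M+1) * (A/B * (2*s*c)) <
      ((2*M+2) * (A*s) * c * (B*c) + (2*M+1) * (A*s^3) * B) / (B*c)^2 := by
  rw [lt_div_iff₀ (by positivity)]
  have e : (M+1) * (A/B * (2*s*c)) * (B*c)^2 = 2*(M+1)*A*B*s*c^3 := by
    field_simp
  rw [e]
  have h1 : 0 < A*B*s := by positivity
  nlinarith [mul_pos h1 (mul_pos (mul_pos (sub_pos.2 hc1) hc) hc),
    mul_pos h1 (mul_pos hs hs), h1]

lemma ptA (m : ℕ) (hm : 1 ≤ m) {r : ℝ} (hr0 : 0 < r) (hrpi : r < π) :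
    D1 m r < 2*((m:ℝ)+1) * f m r := by
  have hs : 0 < Real.sin (r/2) := Real.sin_pos_of_pos_of_lt_pi (by linarith)
    (by linarith [Real.pi_pos])
  have hc : 0 < Real.cos (r/2) := Real.cos_pos_of_mem_Ioo
    ⟨by linarith [Real.pi_pos], by linarith⟩
  have hpy : Real.sin (r/2)^2 + Real.cos (r/2)^2 = 1 := Real.sin_sq_add_cos_sq _
  have hsr : Real.sin r = 2*Real.sin (r/2)*Real.cos (r/2) := by
    rw [← Real.sin_two_mul]; ring_nf
  have hcr : Real.cos r = 2*Real.cos (r/2)^2 - 1 := by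
    rw [← Real.cos_two_mul]; ring_nf
  obtain ⟨k, hk⟩ : ∃ k, 2*m = k+1 := ⟨2*m-1, by omega⟩
  unfold D1 f
  rw [hk, Real.tan_eq_sin_div_cos, hsr, hcr]
  exact algA (m:ℝ) _ _ k hs hc hpy

lemma ptB (m : ℕ) (hm : 1 ≤ m) {r : ℝ} (hr0 : 0 < r) (hrpi : r < π) :
    ((m:ℝ)+1) * f m r < D2 m r := by
  have hs : 0 < Real.sin (r/2) := Real.sin_pos_of_pos_of_lt_pi (by linarith)
    (by linarith [Real.pi_pos])
  have hc : 0 < Real.cos (r/2) := Real.cos_pos_of_mem_Ioo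
    ⟨by linarith [Real.pi_pos], by linarith⟩
  have hpy : Real.sin (r/2)^2 + Real.cos (r/2)^2 = 1 := Real.sin_sq_add_cos_sq _
  have hc1 : Real.cos (r/2) < 1 := by nlinarith
  have hsr : Real.sin r = 2*Real.sin (r/2)*Real.cos (r/2) := by
    rw [← Real.sin_two_mul]; ring_nf
  have etan : Real.tan (r/2)^(2*m) = Real.sin (r/2)^(2*m) / Real.cos (r/2)^(2*m) := by
    rw [Real.tan_eq_sin_div_cos, div_pow]
  have e1 : Real.sin (r/2)^(2*m+1) = Real.sin (r/2)^(2*m) * Real.sin (r/2) := pow_succ _ _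
  have e3 : Real.sin (r/2)^(2*m+3) = Real.sin (r/2)^(2*m) * Real.sin (r/2)^3 := by
    rw [← pow_add]
  have e2 : Real.cos (r/2)^(2*m+1) = Real.cos (r/2)^(2*m) * Real.cos (r/2) := pow_succ _ _
  unfold D2 f
  rw [hsr, etan, e1, e2, e3]
  exact algB (m:ℝ) _ _ _ _ (by positivity) hs hc hc1 (pow_pos hs _) (pow_pos hc _)

lemma half_hasDerivAt (r : ℝ) : HasDerivAt (fun x : ℝ => x/2) (1/2) r := by
  simpa using (hasDerivAt_id r).div_const 2

lemma tanHalf_hasDerivAt {r : ℝ} (h : Real.cos (r/2) ≠ 0) :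
    HasDerivAt (fun x => Real.tan (x/2)) (1 / Real.cos (r/2)^2 * (1/2)) r :=
  HasDerivAt.comp (h₂ := Real.tan) r (Real.hasDerivAt_tan h) (half_hasDerivAt r)

lemma sinHalf_hasDerivAt (r : ℝ) :
    HasDerivAt (fun x => Real.sin (x/2)) (Real.cos (r/2) * (1/2)) r :=
  HasDerivAt.comp (h₂ := Real.sin) r (Real.hasDerivAt_sin (r/2)) (half_hasDerivAt r)

lemma cosHalf_hasDerivAt (r : ℝ) :
    HasDerivAt (fun x => Real.cos (x/2)) (-Real.sin (r/2) * (1/2)) r :=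
  HasDerivAt.comp (h₂ := Real.cos) r (Real.hasDerivAt_cos (r/2)) (half_hasDerivAt r)

lemma F_hasDerivAt (m : ℕ) {r : ℝ} (h : Real.cos (r/2) ≠ 0) :
    HasDerivAt (F m) (D1 m r) r := by
  have h1 : HasDerivAt (fun x => Real.tan (x/2)^(2*m))
      ((2*m : ℕ) * Real.tan (r/2)^(2*m-1) * (1 / Real.cos (r/2)^2 * (1/2))) r :=
    (tanHalf_hasDerivAt h).pow (2*m)
  have h2 : HasDerivAt (fun x => Real.sin x ^ 2)
      ((2:ℕ) * Real.sin r ^ 1 * Real.cos r) r := (Real.hasDerivAt_sin r).pow 2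
  have := h1.fun_mul h2
  refine this.congr_deriv ?_
  unfold D1
  push_cast
  ring

lemma G_hasDerivAt (m : ℕ) {r : ℝ} (h : Real.cos (r/2) ≠ 0) :
    HasDerivAt (G m) (D2 m r) r := by
  have hnum : HasDerivAt (fun x => 2 * Real.sin (x/2)^(2*m+2))
      (2 * ((2*m+2 : ℕ) * Real.sin (r/2)^(2*m+1) * (Real.cos (r/2) * (1/2)))) r := by
    simpa using (((sinHalf_hasDerivAt r).pow (2*m+2)).const_mul 2)
  have hden : HasDerivAt (fun x => Real.cos (x/2)^(2*m+1))
      ((2*m+1 : ℕ) * Real.cos (r/2)^(2*m) * (-Real.sin (r/2) * (1/2))) r := by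
    simpa using ((cosHalf_hasDerivAt r).fun_pow (2*m+1))
  have hden' : Real.cos (r/2)^(2*m+1) ≠ 0 := pow_ne_zero _ h
  have := hnum.div hden hden'
  refine this.congr_deriv ?_
  unfold D2
  push_cast
  field_simp
  ring

end XiB

theorem xi_two_sided_bound (m : ℕ) (hm : 1 ≤ m) (R : ℝ) (hR : R ∈ Set.Ioo 0 π) :
    (m : ℝ)^2 * ((m : ℝ) + 1) / (4 * Real.sin (R/2)^3) <
      (m : ℝ)^2 * Real.tan (R/2)^(2*m) /
        (Real.sin R * ∫ r in (0:ℝ)..R, Real.tan (r/2)^(2*m) * Real.sin r) ∧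
    (m : ℝ)^2 * Real.tan (R/2)^(2*m) /
        (Real.sin R * ∫ r in (0:ℝ)..R, Real.tan (r/2)^(2*m) * Real.sin r) <
      2 * (m : ℝ)^2 * ((m : ℝ) + 1) / Real.sin R^3 := by
  obtain ⟨hR0, hRpi⟩ := hR
  have huIcc : uIcc (0:ℝ) R = Icc 0 R := uIcc_of_le hR0.le
  have hcpos : ∀ r ∈ Icc (0:ℝ) R, 0 < Real.cos (r/2) := by
    intro r hr
    exact Real.cos_pos_of_mem_Ioo ⟨by linarith [hr.1, Real.pi_pos], by linarith [hr.2]⟩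
  have hcont_half : Continuous (fun x : ℝ => x/2) := continuous_id.div_const 2
  have hcont_tan : ContinuousOn (fun r => Real.tan (r/2)) (Icc 0 R) := by
    intro r hr
    have h1 : ContinuousAt (fun x : ℝ => Real.tan (x/2)) r :=
      ContinuousAt.comp (g := Real.tan) (f := fun x : ℝ => x/2)
        (Real.continuousAt_tan.2 (hcpos r hr).ne') hcont_half.continuousAt
    exact h1.continuousWithinAt
  have hcont_sinh : Continuous (fun r : ℝ => Real.sin (r/2)) :=
    Real.continuous_sin.comp hcont_half
  have hcont_cosh : Continuous (fun r : ℝ => Real.cos (r/2)) :=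
    Real.continuous_cos.comp hcont_half
  have hcont_f : ContinuousOn (XiB.f m) (Icc 0 R) :=
    (hcont_tan.pow _).mul Real.continuous_sin.continuousOn
  have hcont_D1 : ContinuousOn (XiB.D1 m) (Icc 0 R) := by
    unfold XiB.D1
    apply ContinuousOn.add
    · exact ((continuousOn_const.mul (hcont_tan.pow _)).mul
        ((continuousOn_const.div (hcont_cosh.continuousOn.pow 2)
          (fun r hr => pow_ne_zero 2 (hcpos r hr).ne')).mul continuousOn_const)).mul
        (Real.continuous_sin.continuousOn.pow 2)
    · exact (hcont_tan.pow _).mul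
        (((continuous_const.mul Real.continuous_sin).mul Real.continuous_cos).continuousOn)
  have hcont_D2 : ContinuousOn (XiB.D2 m) (Icc 0 R) := by
    unfold XiB.D2
    apply ContinuousOn.div
    · exact (((continuousOn_const.mul (hcont_sinh.continuousOn.pow _)).mul
        hcont_cosh.continuousOn).mul (hcont_cosh.continuousOn.pow _)).add
        ((continuousOn_const.mul (hcont_sinh.continuousOn.pow _)).mul
          (hcont_cosh.continuousOn.pow _))
    · exact (hcont_cosh.continuousOn.pow _).pow 2
    · exact fun r hr => pow_ne_zero _ (pow_ne_zero _ (hcpos r hr).ne')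
  have hint_f : IntervalIntegrable (XiB.f m) MeasureTheory.volume 0 R :=
    ContinuousOn.intervalIntegrable (by rw [huIcc]; exact hcont_f)
  have hint_D1 : IntervalIntegrable (XiB.D1 m) MeasureTheory.volume 0 R :=
    ContinuousOn.intervalIntegrable (by rw [huIcc]; exact hcont_D1)
  have hint_D2 : IntervalIntegrable (XiB.D2 m) MeasureTheory.volume 0 R :=
    ContinuousOn.intervalIntegrable (by rw [huIcc]; exact hcont_D2)
  have hIpos : 0 < ∫ r in (0:ℝ)..R, XiB.f m r := by
    apply intervalIntegral.intervalIntegral_pos_of_pos_on hint_f _ hR0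
    intro r hr
    have hs : 0 < Real.sin (r/2) := Real.sin_pos_of_pos_of_lt_pi (by linarith [hr.1])
      (by linarith [hr.2, Real.pi_pos])
    have hc : 0 < Real.cos (r/2) := hcpos r ⟨hr.1.le, hr.2.le⟩
    have htanp : 0 < Real.tan (r/2) := by
      rw [Real.tan_eq_sin_div_cos]; positivity
    have hsinp : 0 < Real.sin r := Real.sin_pos_of_pos_of_lt_pi hr.1 (by linarith [hr.2])
    unfold XiB.f
    positivity
  have hFTC1 : ∫ r in (0:ℝ)..R, XiB.D1 m r = XiB.F m R - XiB.F m 0 :=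
    intervalIntegral.integral_eq_sub_of_hasDerivAt
      (fun r hr => XiB.F_hasDerivAt m (hcpos r (huIcc ▸ hr)).ne') hint_D1
  have hFTC2 : ∫ r in (0:ℝ)..R, XiB.D2 m r = XiB.G m R - XiB.G m 0 :=
    intervalIntegral.integral_eq_sub_of_hasDerivAt
      (fun r hr => XiB.G_hasDerivAt m (hcpos r (huIcc ▸ hr)).ne') hint_D2
  have hF0 : XiB.F m 0 = 0 := by unfold XiB.F; simp
  have hG0 : XiB.G m 0 = 0 := by unfold XiB.G; simp
  -- inequality A : F R < 2(m+1) ∫ f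
  have hA : XiB.F m R < 2*((m:ℝ)+1) * ∫ r in (0:ℝ)..R, XiB.f m r := by
    have hpos := intervalIntegral.intervalIntegral_pos_of_pos_on
      ((hint_f.const_mul (2*((m:ℝ)+1))).sub hint_D1)
      (fun r hr => sub_pos.2 (XiB.ptA m hm hr.1 (lt_trans hr.2 hRpi))) hR0
    rw [intervalIntegral.integral_sub (hint_f.const_mul _) hint_D1,
      intervalIntegral.integral_const_mul, hFTC1, hF0] at hpos
    linarith
  -- inequality B : (m+1) ∫ f < G R
  have hB : ((m:ℝ)+1) * (∫ r in (0:ℝ)..R, XiB.f m r) < XiB.G m R := by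
    have hpos := intervalIntegral.intervalIntegral_pos_of_pos_on
      (hint_D2.sub (hint_f.const_mul ((m:ℝ)+1)))
      (fun r hr => sub_pos.2 (XiB.ptB m hm hr.1 (lt_trans hr.2 hRpi))) hR0
    rw [intervalIntegral.integral_sub hint_D2 (hint_f.const_mul _),
      intervalIntegral.integral_const_mul, hFTC2, hG0] at hpos
    linarith
  -- final algebra
  have hIeq : (∫ r in (0:ℝ)..R, Real.tan (r/2)^(2*m) * Real.sin r)
      = ∫ r in (0:ℝ)..R, XiB.f m r := rfl
  rw [hIeq]
  set I := ∫ r in (0:ℝ)..R, XiB.f m r with hIdef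
  have hs : 0 < Real.sin (R/2) := Real.sin_pos_of_pos_of_lt_pi (by linarith)
    (by linarith [Real.pi_pos])
  have hc : 0 < Real.cos (R/2) := hcpos R ⟨hR0.le, le_refl R⟩
  have hsR : Real.sin R = 2*Real.sin (R/2)*Real.cos (R/2) := by
    rw [← Real.sin_two_mul]; ring_nf
  have hsRpos : 0 < Real.sin R := Real.sin_pos_of_pos_of_lt_pi hR0 hRpi
  have hMpos : (0:ℝ) < m := by exact_mod_cast hm
  have etan : Real.tan (R/2)^(2*m) = Real.sin (R/2)^(2*m) / Real.cos (R/2)^(2*m) := by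
    rw [Real.tan_eq_sin_div_cos, div_pow]
  have hGR : XiB.G m R = 2*(Real.sin (R/2)^(2*m) * Real.sin (R/2)^2)
      / (Real.cos (R/2)^(2*m) * Real.cos (R/2)) := by
    unfold XiB.G
    rw [show 2*m+2 = 2*m+2 from rfl]
    field_simp
    ring
  have hFR : XiB.F m R
      = (Real.sin (R/2)^(2*m) / Real.cos (R/2)^(2*m)) * Real.sin R^2 := by
    unfold XiB.F; rw [etan]
  rw [hGR] at hB
  rw [hFR] at hA
  set A := Real.sin (R/2)^(2*m) with hAdef
  set B := Real.cos (R/2)^(2*m) with hBdef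
  have hApos : 0 < A := pow_pos hs _
  have hBpos : 0 < B := pow_pos hc _
  constructor
  · rw [etan, div_lt_div_iff₀ (by positivity) (mul_pos hsRpos hIpos)]
    calc (m:ℝ)^2*((m:ℝ)+1)*(Real.sin R*I)
        = (2*(m:ℝ)^2*Real.sin (R/2)*Real.cos (R/2))*(((m:ℝ)+1)*I) := by rw [hsR]; ring
      _ < (2*(m:ℝ)^2*Real.sin (R/2)*Real.cos (R/2))
            *(2*(A*Real.sin (R/2)^2)/(B*Real.cos (R/2))) := by
          exact mul_lt_mul_of_pos_left hB (by positivity)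
      _ = (m:ℝ)^2*(A/B)*(4*Real.sin (R/2)^3) := by field_simp; ring
  · rw [etan, div_lt_div_iff₀ (mul_pos hsRpos hIpos) (by positivity)]
    calc (m:ℝ)^2*(A/B)*Real.sin R^3
        = ((m:ℝ)^2*Real.sin R)*((A/B)*Real.sin R^2) := by ring
      _ < ((m:ℝ)^2*Real.sin R)*(2*((m:ℝ)+1)*I) :=
          mul_lt_mul_of_pos_left hA (by positivity)
      _ = 2*(m:ℝ)^2*((m:ℝ)+1)*(Real.sin R*I) := by ring
end

section
/- For each integer m ≥ 1 and R > 0, define ξ_m(R) = m² (tanh(R/2))^{2m} / ( sinh R · ∫₀^R (tanh(r/2))^{2m} sinh r dr ). Then the function R ↦ ξ_m(R) · sinh³(R/2) is strictly decreasing on (0, +∞). -/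
/-!
Write `s, c, t` for `sinh (R/2), cosh (R/2), tanh (R/2)` and `I` for the integral. Then
`ξ_m(R) s³ = (m²/2) · t^(2m+1) s / I`, and the derivative of `t^(2m+1) s / I` has the sign of
`(m + 1 + s²/2) I - c² t^(2m+1) sinh R`. This vanishes at `0` and has derivative
`(s c / 2) (I - 3 t^(2m+1) sinh R)`, which is negative because `I < 3 t^(2m+1) sinh R`; the last
inequality holds at `0` with equality and is again proved by comparing derivatives.
-/

open Real Set

noncomputable def tanhHalfPowIntegral (m : ℕ) (R : ℝ) : ℝ :=
  ∫ r in (0:ℝ)..R, tanh (r/2)^(2*m) * sinh r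

lemma lt_of_hasDerivAt_lt_of_eq {f g f' g' : ℝ → ℝ} {a b : ℝ}
    (hf : ∀ x, HasDerivAt f (f' x) x) (hg : ∀ x, HasDerivAt g (g' x) x)
    (hfg : f a = g a) (hlt : ∀ x, a < x → f' x < g' x) (hab : a < b) : f b < g b := by
  have hmono : StrictMonoOn (g - f) (Ici a) := by
    refine strictMonoOn_of_hasDerivWithinAt_pos (convex_Ici a)
      (fun x _ => ((hg x).sub (hf x)).continuousAt.continuousWithinAt)
      (fun x _ => ((hg x).sub (hf x)).hasDerivWithinAt) ?_
    rw [interior_Ici]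
    exact fun x hx => sub_pos.2 (hlt x hx)
  have := hmono self_mem_Ici hab.le hab
  simp only [Pi.sub_apply, hfg, sub_self] at this
  linarith

lemma sinh_eq_two_mul_sinh_half_mul_cosh_half (x : ℝ) :
    sinh x = 2 * sinh (x/2) * cosh (x/2) := by
  rw [← sinh_two_mul]; ring_nf

lemma tanh_half_pos {x : ℝ} (hx : 0 < x) : 0 < tanh (x/2) := by
  rw [tanh_eq_sinh_div_cosh]
  exact div_pos (sinh_pos_iff.2 (half_pos hx)) (cosh_pos _)

lemma tanh_half_pow_mul_sinh (k : ℕ) (x : ℝ) :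
    tanh (x/2)^k * sinh x = 2 * tanh (x/2)^(k+1) * cosh (x/2)^2 := by
  have hc := (cosh_pos (x/2)).ne'
  rw [tanh_eq_sinh_div_cosh, sinh_eq_two_mul_sinh_half_mul_cosh_half x, div_pow, div_pow]
  field_simp
  ring

lemma continuous_tanh_half_pow_mul_sinh (m : ℕ) :
    Continuous fun r : ℝ => tanh (r/2)^(2*m) * sinh r := by
  simp only [tanh_eq_sinh_div_cosh]
  exact ((Continuous.div (by fun_prop) (by fun_prop) fun x => (cosh_pos _).ne').pow _).mul
    continuous_sinh

lemma hasDerivAt_tanhHalfPowIntegral (m : ℕ) (x : ℝ) :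
    HasDerivAt (tanhHalfPowIntegral m) (2 * tanh (x/2)^(2*m+1) * cosh (x/2)^2) x := by
  rw [← tanh_half_pow_mul_sinh]
  have hcont := continuous_tanh_half_pow_mul_sinh m
  exact intervalIntegral.integral_hasDerivAt_right (hcont.intervalIntegrable _ _)
    (hcont.stronglyMeasurableAtFilter _ _) hcont.continuousAt

lemma tanhHalfPowIntegral_zero (m : ℕ) : tanhHalfPowIntegral m 0 = 0 :=
  intervalIntegral.integral_same

lemma tanhHalfPowIntegral_pos (m : ℕ) {R : ℝ} (hR : 0 < R) : 0 < tanhHalfPowIntegral m R := by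
  refine intervalIntegral.intervalIntegral_pos_of_pos_on
    ((continuous_tanh_half_pow_mul_sinh m).intervalIntegrable _ _) (fun x hx => ?_) hR
  have ht := tanh_half_pos hx.1
  have hs := sinh_pos_iff.2 hx.1
  positivity

lemma hasDerivAt_sinh_half (x : ℝ) :
    HasDerivAt (fun y => sinh (y/2)) (cosh (x/2) / 2) x :=
  ((hasDerivAt_id x).div_const 2).sinh.congr_deriv (by simp; ring)

lemma hasDerivAt_cosh_half (x : ℝ) :
    HasDerivAt (fun y => cosh (y/2)) (sinh (x/2) / 2) x :=
  ((hasDerivAt_id x).div_const 2).cosh.congr_deriv (by simp; ring)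

lemma hasDerivAt_tanh_half (x : ℝ) :
    HasDerivAt (fun y => tanh (y/2)) (1 / (2 * cosh (x/2)^2)) x := by
  have hc := (cosh_pos (x/2)).ne'
  simp only [tanh_eq_sinh_div_cosh]
  refine ((hasDerivAt_sinh_half x).div (hasDerivAt_cosh_half x) hc).congr_deriv ?_
  field_simp
  linear_combination cosh_sq (x/2)

lemma hasDerivAt_tanh_half_pow_mul_sinh (m : ℕ) (x : ℝ) :
    HasDerivAt (fun y => tanh (y/2)^(2*m+1) * sinh y)
      (2 * tanh (x/2)^(2*m+1) * (m + cosh (x/2)^2)) x := by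
  have hc := (cosh_pos (x/2)).ne'
  refine (((hasDerivAt_tanh_half x).pow (2*m+1)).mul (hasDerivAt_sinh x)).congr_deriv ?_
  have hcosh : cosh x = 2 * cosh (x/2)^2 - 1 := by
    have h := cosh_two_mul (x/2)
    rw [mul_div_cancel₀ x two_ne_zero] at h
    linear_combination h - cosh_sq (x/2)
  rw [sinh_eq_two_mul_sinh_half_mul_cosh_half, hcosh]
  simp only [Pi.pow_apply, Nat.add_sub_cancel, tanh_eq_sinh_div_cosh, div_pow]
  push_cast
  field_simp
  ring

lemma hasDerivAt_tanh_half_pow_mul_sinh_half (m : ℕ) (x : ℝ) :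
    HasDerivAt (fun y => tanh (y/2)^(2*m+1) * sinh (y/2))
      (tanh (x/2)^(2*m+1) * (2*m + 1 + cosh (x/2)^2) / (2 * cosh (x/2))) x := by
  have hc := (cosh_pos (x/2)).ne'
  refine (((hasDerivAt_tanh_half x).pow (2*m+1)).mul (hasDerivAt_sinh_half x)).congr_deriv ?_
  simp only [Pi.pow_apply, Nat.add_sub_cancel, tanh_eq_sinh_div_cosh, div_pow]
  push_cast
  field_simp
  ring

lemma tanhHalfPowIntegral_lt (m : ℕ) {R : ℝ} (hR : 0 < R) :
    tanhHalfPowIntegral m R < 3 * (tanh (R/2)^(2*m+1) * sinh R) := by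
  refine lt_of_hasDerivAt_lt_of_eq (hasDerivAt_tanhHalfPowIntegral m)
    (fun x => (hasDerivAt_tanh_half_pow_mul_sinh m x).const_mul 3)
    (by simp [tanhHalfPowIntegral_zero]) (fun x hx => ?_) hR
  have hT := pow_pos (tanh_half_pos hx) (2*m+1)
  nlinarith [mul_nonneg hT.le m.cast_nonneg, mul_pos hT (pow_pos (cosh_pos (x/2)) 2)]

lemma mul_tanhHalfPowIntegral_lt (m : ℕ) {R : ℝ} (hR : 0 < R) :
    (m + 1 + sinh (R/2)^2/2) * tanhHalfPowIntegral m R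
      < cosh (R/2)^2 * (tanh (R/2)^(2*m+1) * sinh R) := by
  have hf (x : ℝ) : HasDerivAt (fun y => (m + 1 + sinh (y/2)^2/2) * tanhHalfPowIntegral m y)
      (sinh (x/2) * cosh (x/2) / 2 * tanhHalfPowIntegral m x
        + (m + 1 + sinh (x/2)^2/2) * (2 * tanh (x/2)^(2*m+1) * cosh (x/2)^2)) x := by
    refine ((((hasDerivAt_sinh_half x).pow 2).div_const 2).const_add _).mul
      (hasDerivAt_tanhHalfPowIntegral m x) |>.congr_deriv ?_
    simp only [Pi.pow_apply]
    ring
  have hg (x : ℝ) : HasDerivAt (fun y => cosh (y/2)^2 * (tanh (y/2)^(2*m+1) * sinh y))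
      (sinh (x/2) * cosh (x/2) * (tanh (x/2)^(2*m+1) * sinh x)
        + cosh (x/2)^2 * (2 * tanh (x/2)^(2*m+1) * (m + cosh (x/2)^2))) x := by
    refine ((hasDerivAt_cosh_half x).pow 2).mul (hasDerivAt_tanh_half_pow_mul_sinh m x)
      |>.congr_deriv ?_
    simp only [Pi.pow_apply]
    ring
  refine lt_of_hasDerivAt_lt_of_eq hf hg (by simp [tanhHalfPowIntegral_zero]) (fun x hx => ?_) hR
  have hs := sinh_pos_iff.2 (half_pos hx)
  have hc := cosh_pos (x/2)
  have hI := tanhHalfPowIntegral_lt m hx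
  have key : sinh (x/2) * cosh (x/2) * (tanh (x/2)^(2*m+1) * sinh x)
        + cosh (x/2)^2 * (2 * tanh (x/2)^(2*m+1) * (m + cosh (x/2)^2))
      - (sinh (x/2) * cosh (x/2) / 2 * tanhHalfPowIntegral m x
        + (m + 1 + sinh (x/2)^2/2) * (2 * tanh (x/2)^(2*m+1) * cosh (x/2)^2))
      = sinh (x/2) * cosh (x/2) / 2
          * (3 * (tanh (x/2)^(2*m+1) * sinh x) - tanhHalfPowIntegral m x) := by
    linear_combination (-(1/2) * sinh (x/2) * cosh (x/2) * tanh (x/2)^(2*m+1))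
      * sinh_eq_two_mul_sinh_half_mul_cosh_half x
      + (2 * tanh (x/2)^(2*m+1) * cosh (x/2)^2) * cosh_sq (x/2)
  have hpos : 0 < sinh (x/2) * cosh (x/2) / 2
      * (3 * (tanh (x/2)^(2*m+1) * sinh x) - tanhHalfPowIntegral m x) :=
    mul_pos (by positivity) (sub_pos.2 hI)
  linarith

lemma strictAntiOn_tanh_half_pow_mul_sinh_half_div (m : ℕ) :
    StrictAntiOn (fun R => tanh (R/2)^(2*m+1) * sinh (R/2) / tanhHalfPowIntegral m R)
      (Ioi 0) := by
  have hderiv {x : ℝ} (hx : 0 < x) := (hasDerivAt_tanh_half_pow_mul_sinh_half m x).div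
    (hasDerivAt_tanhHalfPowIntegral m x) (tanhHalfPowIntegral_pos m hx).ne'
  refine strictAntiOn_of_hasDerivWithinAt_neg (convex_Ioi 0)
    (fun x hx => (hderiv hx).continuousAt.continuousWithinAt)
    (fun x hx => (hderiv (interior_subset hx : 0 < x)).hasDerivWithinAt) fun x hx => ?_
  rw [interior_Ioi] at hx
  have hc := cosh_pos (x/2)
  have hT := pow_pos (tanh_half_pos hx) (2*m+1)
  have hJ := mul_tanhHalfPowIntegral_lt m hx
  have key : tanh (x/2)^(2*m+1) * (2*m + 1 + cosh (x/2)^2) / (2 * cosh (x/2))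
        * tanhHalfPowIntegral m x
      - tanh (x/2)^(2*m+1) * sinh (x/2) * (2 * tanh (x/2)^(2*m+1) * cosh (x/2)^2)
      = tanh (x/2)^(2*m+1) / cosh (x/2) * ((m + 1 + sinh (x/2)^2/2) * tanhHalfPowIntegral m x
          - cosh (x/2)^2 * (tanh (x/2)^(2*m+1) * sinh x)) := by
    rw [sinh_eq_two_mul_sinh_half_mul_cosh_half x]
    field_simp
    linear_combination tanhHalfPowIntegral m x * cosh_sq (x/2)
  refine div_neg_of_neg_of_pos ?_ (pow_pos (tanhHalfPowIntegral_pos m hx) 2)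
  rw [key]
  exact mul_neg_of_pos_of_neg (by positivity) (sub_neg.2 hJ)

theorem xi_sinh_half_cubed_strictAnti (m : ℕ) (hm : 1 ≤ m) :
    StrictAntiOn
      (fun R : ℝ =>
        ((m : ℝ)^2 * Real.tanh (R/2)^(2*m) /
          (Real.sinh R * ∫ r in (0:ℝ)..R, Real.tanh (r/2)^(2*m) * Real.sinh r)) *
            Real.sinh (R/2)^3)
      (Set.Ioi 0) := by
  have hm₀ : (0 : ℝ) < m := by exact_mod_cast hm
  have hxi : EqOn
      (fun R : ℝ => (m : ℝ)^2 / 2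
        * (tanh (R/2)^(2*m+1) * sinh (R/2) / tanhHalfPowIntegral m R))
      (fun R : ℝ => ((m : ℝ)^2 * tanh (R/2)^(2*m) /
          (sinh R * ∫ r in (0:ℝ)..R, tanh (r/2)^(2*m) * sinh r)) * sinh (R/2)^3) (Ioi 0) := by
    intro R hR
    have hs := (sinh_pos_iff.2 (half_pos (show (0:ℝ) < R from hR))).ne'
    have hc := (cosh_pos (R/2)).ne'
    have hI := (tanhHalfPowIntegral_pos m hR).ne'
    unfold tanhHalfPowIntegral at hI ⊢
    dsimp only
    rw [sinh_eq_two_mul_sinh_half_mul_cosh_half R, tanh_eq_sinh_div_cosh, div_pow, div_pow]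
    field_simp
    ring
  refine StrictAntiOn.congr (fun a ha b hb hab => ?_) hxi
  exact mul_lt_mul_of_pos_left (strictAntiOn_tanh_half_pow_mul_sinh_half_div m ha hb hab)
    (by positivity)
end

section
/- For each integer m ≥ 1 and R > 0, define ξ_m(R) = m² (tanh(R/2))^{2m} / ( sinh R · ∫₀^R (tanh(r/2))^{2m} sinh r dr ). Then the function R ↦ ξ_m(R) · R³ is strictly decreasing on (0, +∞). -/
open Real Set MeasureTheory intervalIntegral

noncomputable def JJ (m : ℕ) (R : ℝ) : ℝ :=
  ∫ r in (0:ℝ)..R, Real.tanh (r/2)^(2*m) * Real.sinh r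

lemma continuous_tanh' : Continuous Real.tanh := by
  have : Real.tanh = fun x => Real.sinh x / Real.cosh x := by
    funext x; exact Real.tanh_eq_sinh_div_cosh x
  rw [this]
  exact Real.continuous_sinh.div Real.continuous_cosh fun x => (Real.cosh_pos x).ne'

lemma continuous_integrand (m : ℕ) :
    Continuous (fun r : ℝ => Real.tanh (r/2)^(2*m) * Real.sinh r) :=
  ((continuous_tanh'.comp (continuous_id.div_const 2)).pow _).mul Real.continuous_sinh

lemma JJ_hasDerivAt (m : ℕ) (R : ℝ) :
    HasDerivAt (JJ m) (Real.tanh (R/2)^(2*m) * Real.sinh R) R :=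
  integral_hasDerivAt_right ((continuous_integrand m).intervalIntegrable _ _)
    ((continuous_integrand m).stronglyMeasurableAtFilter _ _)
    (continuous_integrand m).continuousAt

lemma tanh_pos' {x : ℝ} (hx : 0 < x) : 0 < Real.tanh x := by
  rw [Real.tanh_eq_sinh_div_cosh]
  exact div_pos (Real.sinh_pos_iff.2 hx) (Real.cosh_pos x)

lemma JJ_pos (m : ℕ) {R : ℝ} (hR : 0 < R) : 0 < JJ m R := by
  apply intervalIntegral_pos_of_pos_on ((continuous_integrand m).intervalIntegrable _ _) _ hR
  intro x hx
  exact mul_pos (pow_pos (tanh_pos' (by linarith [hx.1])) _) (Real.sinh_pos_iff.2 hx.1)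

lemma hasDerivAt_tanh' (x : ℝ) : HasDerivAt Real.tanh (1 - Real.tanh x ^ 2) x := by
  have h := (Real.hasDerivAt_sinh x).div (Real.hasDerivAt_cosh x) (Real.cosh_pos x).ne'
  have : Real.tanh = fun y => Real.sinh y / Real.cosh y := by
    funext y; exact Real.tanh_eq_sinh_div_cosh y
  rw [this]
  refine h.congr_deriv (Eq.symm ?_)
  have hc := (Real.cosh_pos x).ne'
  show 1 - (Real.sinh x / Real.cosh x) ^ 2 = _
  field_simp

lemma key_identity (R : ℝ) :
    (1 - Real.tanh (R/2) ^ 2) * Real.sinh R = 2 * Real.tanh (R/2) := by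
  have h2 : Real.sinh R = 2 * Real.sinh (R/2) * Real.cosh (R/2) := by
    rw [← Real.sinh_two_mul]; ring_nf
  have hc := (Real.cosh_pos (R/2)).ne'
  have hid := Real.cosh_sq_sub_sinh_sq (R/2)
  rw [h2, Real.tanh_eq_sinh_div_cosh]
  field_simp
  rw [hid, mul_one]

lemma hasDerivAt_T (x : ℝ) :
    HasDerivAt (fun y : ℝ => Real.tanh (y/2)) ((1 - Real.tanh (x/2)^2) * (1/2)) x := by
  have h := (hasDerivAt_tanh' (x/2)).comp x ((hasDerivAt_id x).div_const 2)
  exact h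

lemma hasDerivAt_powT (m : ℕ) (hm : 1 ≤ m) {R : ℝ} (hR : 0 < R) :
    HasDerivAt (fun y : ℝ => Real.tanh (y/2)^(2*m))
      (2*(m:ℝ) * Real.tanh (R/2)^(2*m) / Real.sinh R) R := by
  have h := (hasDerivAt_T R).fun_pow (2*m)
  refine h.congr_deriv ?_
  have hs := (Real.sinh_pos_iff.2 hR).ne'
  have hsplit : Real.tanh (R/2)^(2*m) = Real.tanh (R/2)^(2*m-1) * Real.tanh (R/2) := by
    rw [← pow_succ]
    congr 1
    omega
  have hkey := key_identity R
  rw [hsplit]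
  push_cast [Nat.cast_sub (by omega : 1 ≤ 2*m)]
  field_simp
  linear_combination (Real.tanh (R/2)^(2*m-1)) * hkey

lemma continuous_JJ (m : ℕ) : Continuous (JJ m) := by
  rw [continuous_iff_continuousAt]
  exact fun x => (JJ_hasDerivAt m x).continuousAt

lemma sinh_lt_mul_cosh {x : ℝ} (hx : 0 < x) : Real.sinh x < x * Real.cosh x := by
  have mono : StrictMonoOn (fun y : ℝ => y * Real.cosh y - Real.sinh y) (Ici 0) := by
    apply strictMonoOn_of_deriv_pos (convex_Ici 0)
    · exact ((continuous_id.mul Real.continuous_cosh).sub Real.continuous_sinh).continuousOn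
    · intro y hy
      rw [interior_Ici] at hy
      have h : HasDerivAt (fun y : ℝ => y * Real.cosh y - Real.sinh y)
          (1 * Real.cosh y + y * Real.sinh y - Real.cosh y) y :=
        ((hasDerivAt_id y).mul (Real.hasDerivAt_cosh y)).sub (Real.hasDerivAt_sinh y)
      rw [h.deriv]
      have hs := Real.sinh_pos_iff.2 (mem_Ioi.1 hy)
      have := mem_Ioi.1 hy
      nlinarith
  have h0 := mono (self_mem_Ici) (mem_Ici.2 hx.le) hx
  simp only [Real.cosh_zero, Real.sinh_zero, mul_one, zero_mul, sub_zero, zero_sub, neg_zero] at h0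
  linarith

noncomputable def Hf (m : ℕ) (R : ℝ) : ℝ :=
  Real.tanh (R/2)^(2*m) * Real.sinh R * (3*R*Real.cosh R - 2*Real.sinh R)
    - (2*(m:ℝ) + 2*Real.cosh R - R*Real.sinh R) * JJ m R

noncomputable def Df (m : ℕ) (R : ℝ) : ℝ :=
  R * Real.tanh (R/2)^(2*m) * Real.sinh R^2
    - (2*(m:ℝ)*R + 3*Real.sinh R - R*Real.cosh R) * JJ m R

lemma Hf_hasDerivAt (m : ℕ) (hm : 1 ≤ m) {R : ℝ} (hR : 0 < R) :
    HasDerivAt (Hf m)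
      (Real.tanh (R/2)^(2*m) * (6*(m:ℝ)*(R*Real.cosh R - Real.sinh R)
          + 3*Real.cosh R*(R*Real.cosh R - Real.sinh R) + 4*R*Real.sinh R^2)
        + (R*Real.cosh R - Real.sinh R) * JJ m R) R := by
  have hu := hasDerivAt_powT m hm hR
  have hs := Real.hasDerivAt_sinh R
  have hc := Real.hasDerivAt_cosh R
  have hJ := JJ_hasDerivAt m R
  have h := ((hu.fun_mul hs).fun_mul
      ((((hasDerivAt_id' R).const_mul (3:ℝ)).fun_mul hc).fun_sub (hs.const_mul 2))).fun_sub
    ((((hc.const_mul (2:ℝ)).const_add (2*(m:ℝ))).fun_sub ((hasDerivAt_id' R).fun_mul hs)).fun_mul hJ)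
  have h2 : HasDerivAt (Hf m) _ R := h
  convert h2 using 1
  have hsne := (Real.sinh_pos_iff.2 hR).ne'
  field_simp
  ring

lemma Hf_pos (m : ℕ) (hm : 1 ≤ m) {R : ℝ} (hR : 0 < R) : 0 < Hf m R := by
  have mono : StrictMonoOn (Hf m) (Ici 0) := by
    apply strictMonoOn_of_deriv_pos (convex_Ici 0)
    · apply Continuous.continuousOn
      exact ((((continuous_tanh'.comp (continuous_id.div_const 2)).pow _).mul
        Real.continuous_sinh).mul
          (((continuous_const.mul continuous_id).mul Real.continuous_cosh).sub
            (continuous_const.mul Real.continuous_sinh))).sub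
        (((continuous_const.add (continuous_const.mul Real.continuous_cosh)).sub
          (continuous_id.mul Real.continuous_sinh)).mul (continuous_JJ m))
    · intro x hx
      rw [interior_Ici] at hx
      have hx' := mem_Ioi.1 hx
      rw [(Hf_hasDerivAt m hm hx').deriv]
      have h1 : Real.sinh x < x * Real.cosh x := sinh_lt_mul_cosh hx'
      have h2 : 0 < Real.sinh x := Real.sinh_pos_iff.2 hx'
      have h3 : 0 < Real.cosh x := Real.cosh_pos x
      have h4 : 0 < JJ m x := JJ_pos m hx'
      have h5 : 0 < Real.tanh (x/2)^(2*m) := pow_pos (tanh_pos' (by linarith)) _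
      have h6 : (0:ℝ) ≤ (m:ℝ) := Nat.cast_nonneg m
      have t1 : 0 < x * Real.cosh x - Real.sinh x := by linarith
      have tA : 0 < 6*(m:ℝ)*(x*Real.cosh x - Real.sinh x)
          + 3*Real.cosh x*(x*Real.cosh x - Real.sinh x) + 4*x*Real.sinh x^2 := by
        nlinarith [mul_nonneg h6 t1.le, mul_pos h3 t1, mul_pos hx' (mul_pos h2 h2)]
      exact add_pos (mul_pos h5 tA) (mul_pos t1 h4)
  have h0 := mono (self_mem_Ici) (mem_Ici.2 hR.le) hR
  have hzero : Hf m 0 = 0 := by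
    simp [Hf, JJ, intervalIntegral.integral_same]
  linarith [h0, hzero.symm.le]

lemma Df_hasDerivAt (m : ℕ) (hm : 1 ≤ m) {R : ℝ} (hR : 0 < R) :
    HasDerivAt (Df m) (Hf m R) R := by
  have hu := hasDerivAt_powT m hm hR
  have hs := Real.hasDerivAt_sinh R
  have hc := Real.hasDerivAt_cosh R
  have hJ := JJ_hasDerivAt m R
  have h := (((hasDerivAt_id' R).fun_mul hu).fun_mul (hs.fun_pow 2)).fun_sub
    (((((hasDerivAt_id' R).const_mul (2*(m:ℝ))).fun_add (hs.const_mul 3)).fun_sub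
      ((hasDerivAt_id' R).fun_mul hc)).fun_mul hJ)
  have h2 : HasDerivAt (Df m) _ R := h
  convert h2 using 1
  have hsne := (Real.sinh_pos_iff.2 hR).ne'
  simp only [Hf]
  field_simp
  ring

lemma Df_pos (m : ℕ) (hm : 1 ≤ m) {R : ℝ} (hR : 0 < R) : 0 < Df m R := by
  have mono : StrictMonoOn (Df m) (Ici 0) := by
    apply strictMonoOn_of_deriv_pos (convex_Ici 0)
    · apply Continuous.continuousOn
      exact ((continuous_id.mul
        ((continuous_tanh'.comp (continuous_id.div_const 2)).pow _)).mul
          (Real.continuous_sinh.pow 2)).sub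
        ((((continuous_const.mul continuous_id).add
          (continuous_const.mul Real.continuous_sinh)).sub
            (continuous_id.mul Real.continuous_cosh)).mul (continuous_JJ m))
    · intro x hx
      rw [interior_Ici] at hx
      have hx' := mem_Ioi.1 hx
      rw [(Df_hasDerivAt m hm hx').deriv]
      exact Hf_pos m hm hx'
  have h0 := mono (self_mem_Ici) (mem_Ici.2 hR.le) hR
  have hzero : Df m 0 = 0 := by
    simp [Df, JJ, intervalIntegral.integral_same]
  linarith [h0, hzero.symm.le]

theorem xi_R_cubed_strictAnti (m : ℕ) (hm : 1 ≤ m) :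
    StrictAntiOn
      (fun R : ℝ =>
        ((m : ℝ)^2 * Real.tanh (R/2)^(2*m) /
          (Real.sinh R * ∫ r in (0:ℝ)..R, Real.tanh (r/2)^(2*m) * Real.sinh r)) * R^3)
      (Set.Ioi 0) := by
  have fderiv : ∀ {R : ℝ}, 0 < R →
      HasDerivAt (fun R : ℝ =>
        ((m : ℝ)^2 * Real.tanh (R/2)^(2*m) /
          (Real.sinh R * ∫ r in (0:ℝ)..R, Real.tanh (r/2)^(2*m) * Real.sinh r)) * R^3)
        (-((m:ℝ)^2 * Real.tanh (R/2)^(2*m) * R^2 * Df m R) /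
          (Real.sinh R * JJ m R)^2) R := by
    intro R hR
    have hu := hasDerivAt_powT m hm hR
    have hs := Real.hasDerivAt_sinh R
    have hJ := JJ_hasDerivAt m R
    have hspos := Real.sinh_pos_iff.2 hR
    have hJpos := JJ_pos m hR
    have hne : Real.sinh R * JJ m R ≠ 0 := (mul_pos hspos hJpos).ne'
    have h := ((hu.const_mul ((m:ℝ)^2)).fun_div (hs.fun_mul hJ) hne).fun_mul (hasDerivAt_pow 3 R)
    have h2 : HasDerivAt (fun R : ℝ =>
        ((m : ℝ)^2 * Real.tanh (R/2)^(2*m) /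
          (Real.sinh R * ∫ r in (0:ℝ)..R, Real.tanh (r/2)^(2*m) * Real.sinh r)) * R^3) _ R := h
    convert h2 using 1
    simp only [Df]
    field_simp
    ring
  apply strictAntiOn_of_deriv_neg (convex_Ioi 0)
  · exact fun x hx => (fderiv (mem_Ioi.1 hx)).continuousAt.continuousWithinAt
  · intro x hx
    rw [interior_Ioi] at hx
    have hx' := mem_Ioi.1 hx
    rw [(fderiv hx').deriv]
    apply div_neg_of_neg_of_pos
    · have h1 : 0 < Real.tanh (x/2)^(2*m) := pow_pos (tanh_pos' (by linarith)) _
      have h2 : 0 < Df m x := Df_pos m hm hx'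
      have h3 : (0:ℝ) < (m:ℝ)^2 := by
        have : (1:ℝ) ≤ (m:ℝ) := by exact_mod_cast hm
        nlinarith
      have h4 : 0 < x^2 := by positivity
      have hA := mul_pos (mul_pos (mul_pos h3 h1) h4) h2
      linarith
    · exact pow_pos (mul_pos (Real.sinh_pos_iff.2 hx') (JJ_pos m hx')) 2
end

section
/- For R > 0, define η_1(R) = (tanh(R/2))² sinh R / ∫₀^R (tanh(r/2))² sinh r dr. Then the function R ↦ η_1(R) · R is strictly increasing on (0, +∞). -/
open Real Set

noncomputable def fE (r : ℝ) : ℝ := Real.sinh r * (Real.cosh r - 1) / (Real.cosh r + 1)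

lemma cosh_add_one_ne (r : ℝ) : Real.cosh r + 1 ≠ 0 := by
  have := Real.cosh_pos (x := r); linarith

lemma fE_eq (r : ℝ) : Real.tanh (r/2)^2 * Real.sinh r = fE r := by
  have h1 : Real.cosh (r/2) ≠ 0 := (Real.cosh_pos (r/2)).ne'
  have h2 : Real.cosh r = Real.cosh (r/2)^2 + Real.sinh (r/2)^2 := by
    rw [← Real.cosh_two_mul]; ring_nf
  have h3 : Real.sinh r = 2 * Real.sinh (r/2) * Real.cosh (r/2) := by
    rw [← Real.sinh_two_mul]; ring_nf
  have h4 : Real.cosh (r/2)^2 = Real.sinh (r/2)^2 + 1 := Real.cosh_sq _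
  have h5 : Real.cosh r + 1 ≠ 0 := cosh_add_one_ne r
  unfold fE
  rw [Real.tanh_eq_sinh_div_cosh]
  rw [h2] at h5 ⊢
  rw [h3]
  field_simp
  linear_combination (-Real.sinh (r/2) *
    (Real.sinh (r/2)^2 + Real.cosh (r/2)^2)) * h4

lemma fE_pos {r : ℝ} (hr : 0 < r) : 0 < fE r := by
  have hs : 0 < Real.sinh r := Real.sinh_pos_iff.mpr hr
  have hc : 1 < Real.cosh r := Real.one_lt_cosh.mpr hr.ne'
  have h1 : 0 < Real.cosh r - 1 := by linarith
  have h2 : 0 < Real.cosh r + 1 := by linarith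
  unfold fE
  positivity

lemma fE_cont : Continuous fE := by
  apply Continuous.div
  · exact Real.continuous_sinh.mul (Real.continuous_cosh.sub continuous_const)
  · exact Real.continuous_cosh.add continuous_const
  · exact fun x => cosh_add_one_ne x

lemma fE_hasDeriv (r : ℝ) :
    HasDerivAt fE ((Real.cosh r - 1) * (Real.cosh r + 2) / (Real.cosh r + 1)) r := by
  have hne : Real.cosh r + 1 ≠ 0 := cosh_add_one_ne r
  have h := ((Real.hasDerivAt_sinh r).mul ((Real.hasDerivAt_cosh r).sub_const 1)).div
      ((Real.hasDerivAt_cosh r).add_const 1) hne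
  refine h.congr_deriv (Eq.symm ?_)
  have hss : Real.sinh r * Real.sinh r = Real.cosh r ^ 2 - 1 := by
    have := Real.sinh_sq r; nlinarith [this]
  simp only [Pi.mul_apply]
  rw [div_eq_div_iff hne (pow_ne_zero 2 hne)]
  linear_combination (-2 * (Real.cosh r + 1)) * hss

/-- M positivity: (cosh R + 2) sinh R - R (1 + 2 cosh R) > 0 for R > 0 -/
lemma M_pos {R : ℝ} (hR : 0 < R) :
    0 < (Real.cosh R + 2) * Real.sinh R - R * (1 + 2 * Real.cosh R) := by
  set M : ℝ → ℝ := fun x => (Real.cosh x + 2) * Real.sinh x - x * (1 + 2 * Real.cosh x) with hM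
  have hderiv : ∀ x : ℝ, HasDerivAt M
      (Real.sinh x * Real.sinh x + (Real.cosh x + 2) * Real.cosh x
        - (1 * (1 + 2 * Real.cosh x) + x * (2 * Real.sinh x))) x := by
    intro x
    exact (((Real.hasDerivAt_cosh x).add_const 2).mul (Real.hasDerivAt_sinh x)).sub
      ((hasDerivAt_id x).mul (((Real.hasDerivAt_cosh x).const_mul 2).const_add 1))
  have hmono : StrictMonoOn M (Ici 0) := by
    apply strictMonoOn_of_deriv_pos (convex_Ici 0)
    · exact (((Real.continuous_cosh.add continuous_const).mul Real.continuous_sinh).sub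
        (continuous_id.mul (continuous_const.add
          (continuous_const.mul Real.continuous_cosh)))).continuousOn
    · intro x hx
      rw [interior_Ici] at hx
      rw [(hderiv x).deriv]
      have hs : x < Real.sinh x := Real.self_lt_sinh_iff.mpr hx
      have hs0 : 0 < Real.sinh x := Real.sinh_pos_iff.mpr hx
      have hsq : Real.sinh x ^ 2 = Real.cosh x ^ 2 - 1 := Real.sinh_sq x
      nlinarith [hsq, mul_pos (sub_pos.mpr hs) hs0]
  have h0 : M 0 = 0 := by simp [hM]
  have := hmono self_mem_Ici (le_of_lt hR) hR
  rw [h0] at this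
  exact this

/-- ψ(R) = R (cosh R + 2) / sinh R is strictly increasing on (0, ∞) -/
lemma psi_mono : StrictMonoOn (fun R : ℝ => R * (Real.cosh R + 2) / Real.sinh R) (Ioi 0) := by
  apply strictMonoOn_of_deriv_pos (convex_Ioi 0)
  · apply ContinuousOn.div
    · exact (continuous_id.mul (Real.continuous_cosh.add continuous_const)).continuousOn
    · exact Real.continuous_sinh.continuousOn
    · intro x hx; exact (Real.sinh_pos_iff.mpr hx).ne'
  · intro x hx
    rw [interior_Ioi] at hx
    have hx0 : (0:ℝ) < x := hx
    have hs0 : 0 < Real.sinh x := Real.sinh_pos_iff.mpr hx0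
    have h : HasDerivAt (fun R : ℝ => R * (Real.cosh R + 2) / Real.sinh R)
        (((1 * (Real.cosh x + 2) + x * Real.sinh x) * Real.sinh x
          - x * (Real.cosh x + 2) * Real.cosh x) / Real.sinh x ^ 2) x :=
      ((hasDerivAt_id x).mul ((Real.hasDerivAt_cosh x).add_const 2)).div
        (Real.hasDerivAt_sinh x) hs0.ne'
    rw [h.deriv]
    apply div_pos _ (by positivity)
    have hM := M_pos hx0
    have hsq : Real.sinh x ^ 2 = Real.cosh x ^ 2 - 1 := Real.sinh_sq x
    have hNe : (1 * (Real.cosh x + 2) + x * Real.sinh x) * Real.sinh x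
        - x * (Real.cosh x + 2) * Real.cosh x
        = (Real.cosh x + 2) * Real.sinh x - x * (1 + 2 * Real.cosh x) := by
      linear_combination x * hsq
    rw [hNe]; exact hM

/-- log-derivative ratio -/
lemma fE_ratio {x : ℝ} (hx : 0 < x) :
    (Real.cosh x - 1) * (Real.cosh x + 2) / (Real.cosh x + 1) / fE x
      = (Real.cosh x + 2) / Real.sinh x := by
  have hs : 0 < Real.sinh x := Real.sinh_pos_iff.mpr hx
  have hc : 1 < Real.cosh x := Real.one_lt_cosh.mpr hx.ne'
  have h1 : Real.cosh x - 1 ≠ 0 := by linarith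
  have h2 : Real.cosh x + 1 ≠ 0 := cosh_add_one_ne x
  unfold fE
  field_simp

/-- the key pointwise inequality -/
lemma key_ineq_s12 {t a b : ℝ} (ht0 : 0 < t) (ht1 : t < 1) (ha : 0 < a) (hab : a < b) :
    fE a * fE (b * t) < fE b * fE (a * t) := by
  have hb : 0 < b := ha.trans hab
  set u : ℝ → ℝ := fun R => Real.log (fE R) - Real.log (fE (t * R)) with hu
  have hU : ∀ x ∈ Ioi (0:ℝ), HasDerivAt u
      ((Real.cosh x + 2) / Real.sinh x
        - (Real.cosh (t*x) + 2) / Real.sinh (t*x) * t) x := by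
    intro x hx
    simp only [mem_Ioi] at hx
    have htx : 0 < t * x := mul_pos ht0 hx
    have h1 : HasDerivAt (fun R => Real.log (fE R))
        ((Real.cosh x - 1) * (Real.cosh x + 2) / (Real.cosh x + 1) / fE x) x :=
      (fE_hasDeriv x).log (fE_pos hx).ne'
    have hinner : HasDerivAt (fun R : ℝ => fE (t * R))
        ((Real.cosh (t*x) - 1) * (Real.cosh (t*x) + 2) / (Real.cosh (t*x) + 1) * t) x := by
      have h := (fE_hasDeriv (t*x)).comp x ((hasDerivAt_id x).const_mul t)
      rw [mul_one] at h; exact h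
    have h2 : HasDerivAt (fun R => Real.log (fE (t * R)))
        ((Real.cosh (t*x) - 1) * (Real.cosh (t*x) + 2) / (Real.cosh (t*x) + 1) * t
          / fE (t*x)) x := hinner.log (fE_pos htx).ne'
    have h3 := h1.sub h2
    refine h3.congr_deriv ?_
    rw [fE_ratio hx]
    rw [show (Real.cosh (t*x) - 1) * (Real.cosh (t*x) + 2) / (Real.cosh (t*x) + 1) * t
          / fE (t*x)
        = (Real.cosh (t*x) - 1) * (Real.cosh (t*x) + 2) / (Real.cosh (t*x) + 1)
          / fE (t*x) * t by ring]
    rw [fE_ratio htx]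
  have humono : StrictMonoOn u (Ioi 0) := by
    apply strictMonoOn_of_deriv_pos (convex_Ioi 0)
    · exact fun x hx => ((hU x hx).continuousAt).continuousWithinAt
    · intro x hx
      rw [interior_Ioi] at hx
      rw [(hU x hx).deriv]
      have hx0 : (0:ℝ) < x := hx
      have htx : 0 < t * x := mul_pos ht0 hx0
      have hlt : t * x < x := by nlinarith
      have hpsi := psi_mono (mem_Ioi.mpr htx) (mem_Ioi.mpr hx0) hlt
      have hsx : 0 < Real.sinh x := Real.sinh_pos_iff.mpr hx0
      have hstx : 0 < Real.sinh (t*x) := Real.sinh_pos_iff.mpr htx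
      rw [sub_pos, div_mul_eq_mul_div, div_lt_div_iff₀ hstx hsx]
      simp only at hpsi
      rw [div_lt_div_iff₀ hstx hsx] at hpsi
      have h3 : x * ((Real.cosh (t*x) + 2) * t * Real.sinh x)
          < x * ((Real.cosh x + 2) * Real.sinh (t*x)) := by nlinarith [hpsi]
      exact lt_of_mul_lt_mul_left h3 hx0.le
  have hkey := humono (mem_Ioi.mpr ha) (mem_Ioi.mpr hb) hab
  simp only [hu] at hkey
  have hfa := fE_pos ha
  have hfb := fE_pos hb
  have hfta := fE_pos (mul_pos ht0 ha)
  have hftb := fE_pos (mul_pos ht0 hb)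
  have hlog : Real.log (fE a * fE (t*b)) < Real.log (fE b * fE (t*a)) := by
    rw [Real.log_mul hfa.ne' hftb.ne', Real.log_mul hfb.ne' hfta.ne']
    linarith
  have := (Real.log_lt_log_iff (by positivity) (by positivity)).mp hlog
  rw [mul_comm t b, mul_comm t a] at this
  exact this

lemma F_eq_mul {b : ℝ} (hb : 0 < b) :
    (∫ r in (0:ℝ)..b, fE r) = b * ∫ t in (0:ℝ)..1, fE (b * t) := by
  rw [intervalIntegral.integral_comp_mul_left fE hb.ne', mul_zero, mul_one, smul_eq_mul,
    ← mul_assoc, mul_inv_cancel₀ hb.ne', one_mul]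

theorem eta_one_R_strictMono :
    StrictMonoOn
      (fun R : ℝ =>
        (Real.tanh (R/2)^2 * Real.sinh R /
          ∫ r in (0:ℝ)..R, Real.tanh (r/2)^2 * Real.sinh r) * R)
      (Set.Ioi 0) := by
  have hint : ∀ R : ℝ, (∫ r in (0:ℝ)..R, Real.tanh (r/2)^2 * Real.sinh r)
      = ∫ r in (0:ℝ)..R, fE r := by
    intro R; congr 1; funext r; exact fE_eq r
  intro a ha b hb hab
  simp only [mem_Ioi] at ha hb
  simp only [hint, fE_eq]
  have hFa : 0 < ∫ r in (0:ℝ)..a, fE r :=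
    intervalIntegral.intervalIntegral_pos_of_pos_on
      (fE_cont.intervalIntegrable 0 a) (fun x hx => fE_pos hx.1) ha
  have hFb : 0 < ∫ r in (0:ℝ)..b, fE r :=
    intervalIntegral.intervalIntegral_pos_of_pos_on
      (fE_cont.intervalIntegrable 0 b) (fun x hx => fE_pos hx.1) hb
  rw [div_mul_eq_mul_div, div_mul_eq_mul_div, div_lt_div_iff₀ hFa hFb]
  rw [F_eq_mul ha, F_eq_mul hb]
  have hI : (∫ t in (0:ℝ)..1, fE a * fE (b * t)) < ∫ t in (0:ℝ)..1, fE b * fE (a * t) := by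
    apply intervalIntegral.integral_lt_integral_of_continuousOn_of_le_of_exists_lt zero_lt_one
    · exact (continuous_const.mul (fE_cont.comp (continuous_mul_left b))).continuousOn
    · exact (continuous_const.mul (fE_cont.comp (continuous_mul_left a))).continuousOn
    · intro t ht
      rcases eq_or_lt_of_le ht.2 with h1 | h1
      · rw [h1]; simp [mul_one, mul_comm]
      · exact (key_ineq_s12 ht.1 h1 ha hab).le
    · exact ⟨1/2, by norm_num, key_ineq_s12 (by norm_num) (by norm_num) ha hab⟩
  rw [intervalIntegral.integral_const_mul, intervalIntegral.integral_const_mul] at hI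
  calc fE a * a * (b * ∫ t in (0:ℝ)..1, fE (b * t))
      = a * b * (fE a * ∫ t in (0:ℝ)..1, fE (b * t)) := by ring
    _ < a * b * (fE b * ∫ t in (0:ℝ)..1, fE (a * t)) :=
        mul_lt_mul_of_pos_left hI (mul_pos ha hb)
    _ = fE b * b * (a * ∫ t in (0:ℝ)..1, fE (a * t)) := by ring
end

section
/- Let m ≥ 1 and define M(R) = ∫₀^R (tan(r/2))^{2m} sin r dr for R ∈ (0, π) and J(R) = (2m + cos R) M(R) − (tan(R/2))^{2m} sin²R. Then J'(R) = −2m sin R · ∫₀^{tan(R/2)} t^{2m−1}(1−t²)/(1+t²) dt for all R ∈ (0, π). -/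
open Real Set

private lemma g_cont (m : ℕ) :
    Continuous (fun t : ℝ => t^(2*m-1) * (1 - t^2) / (1 + t^2)) := by
  apply Continuous.div (by continuity) (by continuity)
  intro t; positivity

private lemma hasDerivAt_tanHalf {r : ℝ} (hc : Real.cos (r/2) ≠ 0) :
    HasDerivAt (fun r : ℝ => Real.tan (r/2)) ((1 + Real.tan (r/2)^2)/2) r := by
  have h := (Real.hasDerivAt_tan hc).comp r ((hasDerivAt_id r).div_const 2)
  refine h.congr_deriv (Eq.symm ?_)
  have h2 : Real.cos (r/2) ^ 2 ≠ 0 := pow_ne_zero _ hc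
  field_simp [Real.tan_eq_sin_div_cos]
  rw [Real.tan_eq_sin_div_cos, add_mul, div_pow, div_mul_cancel₀ _ h2]
  linear_combination Real.sin_sq_add_cos_sq (r/2)

private lemma half_id_cos {r : ℝ} (hc : Real.cos (r/2) ≠ 0) :
    (1 + Real.tan (r/2)^2) * Real.cos r = 1 - Real.tan (r/2)^2 := by
  have h2 : r = 2 * (r/2) := by ring
  rw [h2, Real.cos_two_mul, Real.tan_eq_sin_div_cos]
  field_simp
  nlinarith [Real.sin_sq_add_cos_sq (r/2)]

private lemma half_id_sin {r : ℝ} (hc : Real.cos (r/2) ≠ 0) :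
    (1 + Real.tan (r/2)^2) * Real.sin r = 2 * Real.tan (r/2) := by
  have h2 : r = 2 * (r/2) := by ring
  rw [h2, Real.sin_two_mul, Real.tan_eq_sin_div_cos]
  field_simp
  linear_combination Real.sin (r/2) * Real.sin_sq_add_cos_sq (r/2)

theorem J_deriv_sphere (m : ℕ) (hm : 1 ≤ m) (R : ℝ) (hR : R ∈ Set.Ioo 0 π) :
    HasDerivAt
      (fun R : ℝ =>
        (2 * (m : ℝ) + Real.cos R) * (∫ r in (0:ℝ)..R, Real.tan (r/2)^(2*m) * Real.sin r)
          - Real.tan (R/2)^(2*m) * Real.sin R^2)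
      (-2 * (m : ℝ) * Real.sin R *
        ∫ t in (0:ℝ)..Real.tan (R/2), t^(2*m-1) * (1 - t^2) / (1 + t^2)) R := by
  obtain ⟨hR0, hRπ⟩ := hR
  set g : ℝ → ℝ := fun t => t^(2*m-1) * (1 - t^2) / (1 + t^2) with hg
  -- derivative of x ↦ ∫₀ˣ g
  have hIg : ∀ x : ℝ, HasDerivAt (fun x : ℝ => ∫ t in (0:ℝ)..x, g t) (g x) x := by
    intro x
    exact intervalIntegral.integral_hasDerivAt_right
      ((g_cont m).intervalIntegrable 0 x)
      ((g_cont m).stronglyMeasurable.stronglyMeasurableAtFilter)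
      (g_cont m).continuousAt
  -- cos (r/2) > 0 on (-π, π)
  have hcos : ∀ r ∈ Set.Ioo (-π) π, 0 < Real.cos (r/2) := by
    intro r hr
    apply Real.cos_pos_of_mem_Ioo
    constructor <;> [linarith [hr.1]; linarith [hr.2]]
  -- f : integrand of M, continuous at points of (-π, π)
  have hfC : ∀ r ∈ Set.Ioo (-π) π,
      ContinuousAt (fun r : ℝ => Real.tan (r/2)^(2*m) * Real.sin r) r := by
    intro r hr
    have hc := (hcos r hr).ne'
    have h1 : ContinuousAt (fun r : ℝ => Real.tan (r/2)) r :=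
      ContinuousAt.comp (f := fun r : ℝ => r/2) (Real.continuousAt_tan.2 hc)
        (continuousAt_id.div_const 2)
    exact (h1.pow _).mul Real.continuous_sin.continuousAt
  have hsub : Set.Icc (0:ℝ) R ⊆ Set.Ioo (-π) π := by
    intro r hr
    constructor
    · linarith [hr.1, Real.pi_pos]
    · linarith [hr.2]
  have hfInt : IntervalIntegrable (fun r : ℝ => Real.tan (r/2)^(2*m) * Real.sin r)
      MeasureTheory.volume 0 R := by
    apply ContinuousOn.intervalIntegrable
    intro r hr
    rw [Set.uIcc_of_le hR0.le] at hr
    exact (hfC r (hsub hr)).continuousWithinAt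
  -- antiderivative G of the integrand of M
  set G : ℝ → ℝ := fun r =>
    2*(m:ℝ) * (∫ t in (0:ℝ)..Real.tan (r/2), g t) - Real.tan (r/2)^(2*m) * Real.cos r with hG
  have hGderiv : ∀ r, Real.cos (r/2) ≠ 0 →
      HasDerivAt G (Real.tan (r/2)^(2*m) * Real.sin r) r := by
    intro r hc
    set T := Real.tan (r/2) with hT
    have htan := hasDerivAt_tanHalf hc
    have hN : HasDerivAt (fun r : ℝ => ∫ t in (0:ℝ)..Real.tan (r/2), g t)
        (g T * ((1 + T^2)/2)) r := by exact (hIg T).comp r htan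
    have hpow : HasDerivAt (fun r : ℝ => Real.tan (r/2)^(2*m))
        ((2*m : ℕ) * T^(2*m-1) * ((1 + T^2)/2)) r := by
      have h := (htan.pow (2*m))
      exact h
    have hprod : HasDerivAt (fun r : ℝ => Real.tan (r/2)^(2*m) * Real.cos r)
        (((2*m : ℕ) * T^(2*m-1) * ((1 + T^2)/2)) * Real.cos r
          + T^(2*m) * (-Real.sin r)) r := hpow.mul (Real.hasDerivAt_cos r)
    have h := ((hN.const_mul (2*(m:ℝ))).sub hprod)
    refine h.congr_deriv (Eq.symm ?_)
    have hcR : (1 + T^2) * Real.cos r = 1 - T^2 := half_id_cos hc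
    have h1T : (1:ℝ) + T^2 ≠ 0 := by positivity
    have hgT : g T * ((1 + T^2)/2) = T^(2*m-1) * (1 - T^2) / 2 := by
      rw [hg]; field_simp
    rw [hgT]
    have hps : T^(2*m) = T^(2*m-1) * T := by
      rw [← pow_succ]; congr 1; omega
    push_cast
    linear_combination ((m:ℝ) * T^(2*m-1)) * hcR
  -- M(R) = G(R)
  have hM : (∫ r in (0:ℝ)..R, Real.tan (r/2)^(2*m) * Real.sin r) = G R := by
    have heq := intervalIntegral.integral_eq_sub_of_hasDerivAt
      (f := G) (f' := fun r => Real.tan (r/2)^(2*m) * Real.sin r)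
      (a := 0) (b := R) ?_ hfInt
    · rw [heq]
      have hG0 : G 0 = 0 := by
        simp [hG, Real.tan_zero, zero_pow (by omega : 2*m ≠ 0)]
      rw [hG0, sub_zero]
    · intro r hr
      rw [Set.uIcc_of_le hR0.le] at hr
      exact hGderiv r (hcos r (hsub hr)).ne'
  -- now the main derivative
  have hcR0 : 0 < Real.cos (R/2) := hcos R ⟨by linarith [Real.pi_pos], hRπ⟩
  have hc := hcR0.ne'
  set T := Real.tan (R/2) with hT
  have htan := hasDerivAt_tanHalf hc
  have hMd : HasDerivAt (fun u : ℝ => ∫ r in (0:ℝ)..u, Real.tan (r/2)^(2*m) * Real.sin r)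
      (T^(2*m) * Real.sin R) R := by
    apply intervalIntegral.integral_hasDerivAt_right hfInt
    · exact ContinuousOn.stronglyMeasurableAtFilter (isOpen_Ioo (a := -π) (b := π))
        (fun r hr => (hfC r hr).continuousWithinAt) R ⟨by linarith [Real.pi_pos], hRπ⟩
    · exact hfC R ⟨by linarith [Real.pi_pos], hRπ⟩
  have hcosd : HasDerivAt (fun R : ℝ => 2 * (m:ℝ) + Real.cos R) (-Real.sin R) R := by
    simpa using (Real.hasDerivAt_cos R).const_add (2*(m:ℝ))
  have hpow : HasDerivAt (fun r : ℝ => Real.tan (r/2)^(2*m))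
      ((2*m : ℕ) * T^(2*m-1) * ((1 + T^2)/2)) R := by
    have h := (htan.pow (2*m))
    exact h
  have hsin2 : HasDerivAt (fun R : ℝ => Real.sin R ^ 2) (2 * Real.sin R * Real.cos R) R := by
    have h := (Real.hasDerivAt_sin R).pow 2
    refine h.congr_deriv (Eq.symm ?_)
    ring
  have h := (hcosd.mul hMd).sub (hpow.mul hsin2)
  refine h.congr_deriv (Eq.symm ?_)
  rw [hM]
  set N := ∫ t in (0:ℝ)..T, g t with hN
  have hsR : (1 + T^2) * Real.sin R = 2 * T := half_id_sin hc
  have hps : T^(2*m) = T^(2*m-1) * T := by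
    rw [← pow_succ]; congr 1; omega
  simp only [hG, ← hT, ← hN, hps]
  push_cast
  linear_combination ((m:ℝ) * T^(2*m-1) * Real.sin R) * hsR
end

section
/- Let m ≥ 1 and define M(R) = ∫₀^R (tanh(r/2))^{2m} sinh r dr and J(R) = (2m + cosh R) M(R) − (tanh(R/2))^{2m} sinh²R for R > 0. Then J'(R) = −2m sinh R · ∫₀^R (tanh(r/2))^{2m} / tanh r dr, and in particular J(R) < 0 for all R > 0. -/
open Real Set

-- tanh half, basic
noncomputable def th (x : ℝ) : ℝ := Real.tanh (x/2)

lemma th_eq (x : ℝ) : th x = Real.sinh (x/2) / Real.cosh (x/2) := Real.tanh_eq_sinh_div_cosh _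

lemma cosh_half_ne (x : ℝ) : Real.cosh (x/2) ≠ 0 := (Real.cosh_pos _).ne'

lemma th_cont : Continuous th := by
  have : Continuous Real.tanh := by
    simp only [funext Real.tanh_eq_sinh_div_cosh]
    exact Real.continuous_sinh.div Real.continuous_cosh fun x => (Real.cosh_pos x).ne'
  exact this.comp (continuous_id.div_const 2)

lemma hasDerivAt_th (x : ℝ) :
    HasDerivAt th (1 / (2 * Real.cosh (x/2)^2)) x := by
  have h1 : HasDerivAt (fun y : ℝ => y/2) (1/2) x := (hasDerivAt_id x).div_const 2
  have h2 : HasDerivAt Real.tanh (1 / Real.cosh (x/2)^2) (x/2) := by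
    have := ((Real.hasDerivAt_sinh (x/2)).div (Real.hasDerivAt_cosh (x/2)) (cosh_half_ne x))
    have heq : (Real.cosh (x/2) * Real.cosh (x/2) - Real.sinh (x/2) * Real.sinh (x/2)) / Real.cosh (x/2)^2
        = 1 / Real.cosh (x/2)^2 := by
      rw [div_eq_div_iff (by positivity) (by positivity)]
      nlinarith [Real.cosh_sq (x/2)]
    rw [funext Real.tanh_eq_sinh_div_cosh, ← heq]
    exact this
  have := h2.comp x h1
  refine this.congr_deriv ?_
  ring

noncomputable def gf (m : ℕ) (r : ℝ) : ℝ := th r ^ (2*m-1) * (1 + th r ^ 2) / 2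

lemma gf_cont (m : ℕ) : Continuous (gf m) := by
  unfold gf
  exact (((th_cont.pow _).mul ((continuous_const.add (th_cont.pow 2)))).div_const 2)

lemma integrand_eq (m : ℕ) (hm : 1 ≤ m) (r : ℝ) :
    Real.tanh (r/2)^(2*m) / Real.tanh r = gf m r := by
  obtain ⟨k, hk⟩ : ∃ k, 2*m = k+1 ∧ 1 ≤ k := ⟨2*m-1, by omega, by omega⟩
  rcases eq_or_ne r 0 with h | h
  · subst h
    rw [gf]
    simp [th, Real.tanh_zero, zero_pow (by omega : 2*m ≠ 0), zero_pow (by omega : 2*m-1 ≠ 0)]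
  · have hc : Real.cosh (r/2) ≠ 0 := cosh_half_ne r
    have hs : Real.sinh (r/2) ≠ 0 := Real.sinh_ne_zero.mpr (by
      intro h'; exact h (by linarith))
    have hsinh : Real.sinh r = 2 * Real.sinh (r/2) * Real.cosh (r/2) := by
      rw [show r = 2*(r/2) by ring, Real.sinh_two_mul]; ring_nf
    have hcosh : Real.cosh r = Real.cosh (r/2)^2 + Real.sinh (r/2)^2 := by
      rw [show r = 2*(r/2) by ring, Real.cosh_two_mul]; ring_nf
    have hck : 2*m - 1 = k := by omega
    have hsr : Real.sinh r ≠ 0 := Real.sinh_ne_zero.mpr h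
    have ht : Real.tanh r = Real.sinh r / Real.cosh r := Real.tanh_eq_sinh_div_cosh r
    rw [gf, th_eq, hck, hk.1, show Real.tanh (r/2) = Real.sinh (r/2) / Real.cosh (r/2) from Real.tanh_eq_sinh_div_cosh _, ht, hsinh, hcosh]
    have hcr : Real.cosh (r/2)^2 + Real.sinh (r/2)^2 ≠ 0 := by positivity
    rw [div_pow, div_pow]
    field_simp
    ring

lemma hasDerivAt_primitive {f : ℝ → ℝ} (hf : Continuous f) (x : ℝ) :
    HasDerivAt (fun u => ∫ t in (0:ℝ)..u, f t) (f x) x :=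
  intervalIntegral.integral_hasDerivAt_right (hf.intervalIntegrable _ _)
    (hf.stronglyMeasurable.stronglyMeasurableAtFilter) hf.continuousAt

noncomputable def ff (m : ℕ) (r : ℝ) : ℝ := Real.tanh (r/2)^(2*m) * Real.sinh r

lemma ff_cont (m : ℕ) : Continuous (ff m) := by
  unfold ff
  exact ((th_cont.pow _).mul Real.continuous_sinh)

lemma M_eq (m : ℕ) (hm : 1 ≤ m) (x : ℝ) :
    (∫ r in (0:ℝ)..x, ff m r)
      = th x^(2*m) * Real.cosh x - 2*m * ∫ r in (0:ℝ)..x, gf m r := by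
  obtain ⟨k, hk, hk1⟩ : ∃ k, 2*m = k+1 ∧ 1 ≤ k := ⟨2*m-1, by omega, by omega⟩
  set D : ℝ → ℝ := fun x => th x^(2*m) * Real.cosh x - 2*m * (∫ r in (0:ℝ)..x, gf m r)
      - ∫ r in (0:ℝ)..x, ff m r with hD
  have key : ∀ y, HasDerivAt D 0 y := by
    intro y
    have h1 : HasDerivAt (fun x => th x^(2*m)) (((2*m : ℕ) : ℝ) * th y^(2*m-1) * (1/(2*Real.cosh (y/2)^2))) y :=
      (hasDerivAt_th y).pow _
    have h2 : HasDerivAt (fun x => th x^(2*m) * Real.cosh x)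
        (((2*m : ℕ) : ℝ) * th y^(2*m-1) * (1/(2*Real.cosh (y/2)^2)) * Real.cosh y + th y^(2*m) * Real.sinh y) y :=
      h1.mul (Real.hasDerivAt_cosh y)
    have h3 := (hasDerivAt_primitive (gf_cont m) y).const_mul (2*(m:ℝ))
    have h4 := hasDerivAt_primitive (ff_cont m) y
    have h5 := (h2.sub h3).sub h4
    refine h5.congr_deriv ?_
    have h2m : (2:ℝ) * (m:ℝ) = (k:ℝ) + 1 := by exact_mod_cast hk
    rw [gf, ff, hk, th_eq, show Real.tanh (y/2) = Real.sinh (y/2)/Real.cosh (y/2) from Real.tanh_eq_sinh_div_cosh _]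
    simp only [Nat.add_sub_cancel]
    have hcosh : Real.cosh y = Real.cosh (y/2)^2 + Real.sinh (y/2)^2 := by
      rw [show y = 2*(y/2) by ring, Real.cosh_two_mul]; ring_nf
    have hsinh : Real.sinh y = 2 * Real.sinh (y/2) * Real.cosh (y/2) := by
      rw [show y = 2*(y/2) by ring, Real.sinh_two_mul]; ring_nf
    rw [hcosh, hsinh]
    have hc : Real.cosh (y/2) ≠ 0 := cosh_half_ne y
    push_cast
    rw [h2m]
    field_simp
    ring
  have const := is_const_of_deriv_eq_zero (fun y => (key y).differentiableAt)
    (fun y => (key y).deriv) x 0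
  have hD0 : D 0 = 0 := by
    simp [hD, th, Real.tanh_zero, zero_pow (by omega : 2*m ≠ 0)]
  have h2 : (th x ^ (2*m) * Real.cosh x - 2*(m:ℝ) * ∫ r in (0:ℝ)..x, gf m r)
      - (∫ r in (0:ℝ)..x, ff m r) = 0 := const.trans hD0
  linarith

lemma J_hasDeriv (m : ℕ) (hm : 1 ≤ m) (x : ℝ) :
    HasDerivAt
      (fun R : ℝ =>
        (2 * (m : ℝ) + Real.cosh R) * (∫ r in (0:ℝ)..R, Real.tanh (r/2)^(2*m) * Real.sinh r)
          - Real.tanh (R/2)^(2*m) * Real.sinh R^2)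
      (-2 * (m : ℝ) * Real.sinh x * ∫ r in (0:ℝ)..x, gf m r) x := by
  obtain ⟨k, hk, hk1⟩ : ∃ k, 2*m = k+1 ∧ 1 ≤ k := ⟨2*m-1, by omega, by omega⟩
  have h1 : HasDerivAt (fun R : ℝ => 2 * (m:ℝ) + Real.cosh R) (Real.sinh x) x := by
    simpa using (Real.hasDerivAt_cosh x).const_add (2*(m:ℝ))
  have h2 := hasDerivAt_primitive (ff_cont m) x
  have h3 := h1.mul h2
  have h4 : HasDerivAt (fun R => th R^(2*m))
      (((2*m : ℕ) : ℝ) * th x^(2*m-1) * (1/(2*Real.cosh (x/2)^2))) x := (hasDerivAt_th x).pow _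
  have h5 : HasDerivAt (fun R : ℝ => Real.sinh R^2) (2 * Real.sinh x ^ 1 * Real.cosh x) x :=
    (Real.hasDerivAt_sinh x).pow 2
  have h6 := h4.mul h5
  have h7 := h3.sub h6
  have hfun : (fun R : ℝ =>
        (2 * (m : ℝ) + Real.cosh R) * (∫ r in (0:ℝ)..R, Real.tanh (r/2)^(2*m) * Real.sinh r)
          - Real.tanh (R/2)^(2*m) * Real.sinh R^2)
      = (fun R : ℝ => (2 * (m:ℝ) + Real.cosh R) * (∫ r in (0:ℝ)..R, ff m r)
          - th R^(2*m) * Real.sinh R^2) := by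
    funext R; rfl
  rw [hfun]
  refine h7.congr_deriv ?_
  rw [M_eq m hm x, ff]
  have h2m : (2:ℝ) * (m:ℝ) = (k:ℝ) + 1 := by exact_mod_cast hk
  have hsinh : Real.sinh x = 2 * Real.sinh (x/2) * Real.cosh (x/2) := by
    rw [show x = 2*(x/2) by ring, Real.sinh_two_mul]; ring_nf
  have hcosh : Real.cosh x = Real.cosh (x/2)^2 + Real.sinh (x/2)^2 := by
    rw [show x = 2*(x/2) by ring, Real.cosh_two_mul]; ring_nf
  have hc : Real.cosh (x/2) ≠ 0 := cosh_half_ne x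
  rw [hk, th_eq, show Real.tanh (x/2) = Real.sinh (x/2)/Real.cosh (x/2) from Real.tanh_eq_sinh_div_cosh _]
  simp only [Nat.add_sub_cancel]
  rw [hsinh, hcosh]
  push_cast
  rw [show (m:ℝ) = ((k:ℝ)+1)/2 by linarith]
  simp only [div_pow]
  field_simp
  ring

theorem J_deriv_hyperbolic (m : ℕ) (hm : 1 ≤ m) (R : ℝ) (hR : 0 < R) :
    HasDerivAt
      (fun R : ℝ =>
        (2 * (m : ℝ) + Real.cosh R) * (∫ r in (0:ℝ)..R, Real.tanh (r/2)^(2*m) * Real.sinh r)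
          - Real.tanh (R/2)^(2*m) * Real.sinh R^2)
      (-2 * (m : ℝ) * Real.sinh R *
        ∫ r in (0:ℝ)..R, Real.tanh (r/2)^(2*m) / Real.tanh r) R ∧
    (2 * (m : ℝ) + Real.cosh R) * (∫ r in (0:ℝ)..R, Real.tanh (r/2)^(2*m) * Real.sinh r)
      - Real.tanh (R/2)^(2*m) * Real.sinh R^2 < 0 := by
  have hgpos : ∀ y : ℝ, 0 < y → 0 < gf m y := by
    intro y hy
    have hth : 0 < th y := by
      rw [th_eq]
      exact div_pos (Real.sinh_pos_iff.mpr (by linarith)) (Real.cosh_pos _)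
    rw [gf]
    have := pow_pos hth (2*m-1)
    positivity
  have hGpos : ∀ y : ℝ, 0 < y → 0 < ∫ r in (0:ℝ)..y, gf m r := by
    intro y hy
    exact intervalIntegral.intervalIntegral_pos_of_pos_on
      ((gf_cont m).intervalIntegrable _ _) (fun r hr => hgpos r hr.1) hy
  constructor
  · have h := J_hasDeriv m hm R
    have : (∫ r in (0:ℝ)..R, Real.tanh (r/2)^(2*m) / Real.tanh r)
        = ∫ r in (0:ℝ)..R, gf m r := by
      simp only [integrand_eq m hm]
    rw [this]
    exact h
  · set J : ℝ → ℝ := fun R : ℝ =>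
      (2 * (m : ℝ) + Real.cosh R) * (∫ r in (0:ℝ)..R, Real.tanh (r/2)^(2*m) * Real.sinh r)
        - Real.tanh (R/2)^(2*m) * Real.sinh R^2 with hJ
    have hJ0 : J 0 = 0 := by
      simp [hJ, Real.tanh_zero, zero_pow (by omega : 2*m ≠ 0)]
    have hanti : StrictAntiOn J (Icc 0 R) := by
      apply strictAntiOn_of_deriv_neg (convex_Icc 0 R)
      · exact Continuous.continuousOn (by
          have : Differentiable ℝ J := fun y => (J_hasDeriv m hm y).differentiableAt
          exact this.continuous)
      · intro y hy
        rw [interior_Icc] at hy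
        rw [(J_hasDeriv m hm y).deriv]
        have h1 : 0 < Real.sinh y := Real.sinh_pos_iff.mpr hy.1
        have h2 := hGpos y hy.1
        have hm' : (0:ℝ) < m := by exact_mod_cast hm
        have := mul_pos (mul_pos (mul_pos (by norm_num : (0:ℝ) < 2) hm') h1) h2
        nlinarith
    have := hanti (left_mem_Icc.mpr hR.le) (right_mem_Icc.mpr hR.le) hR
    rw [hJ0] at this
    exact this
end

section
/- Let h : [0, R] → ℝ be smooth with h(0) = 0, h'(0) = 1, h(r) > 0 on (0, R], h'' ≤ 0, and 0 < h' ≤ 1 on [0, R]. Let n ≥ 2, τ = m(n−2+m) for an integer m ≥ 1, and let z : [0, R] → ℝ satisfy the Riccati equation z' = −(z² + (n−2) h' z − τ)/h on (0, R] with z(r) → m as r → 0+. Then z is monotone increasing on (0, R]; equivalently z² + (n−2) h' z − τ ≤ 0 on (0, R]. -/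
open Real Set

set_option maxHeartbeats 1000000 in
theorem riccati_z_monotone (R : ℝ) (hR : 0 < R) (h : ℝ → ℝ) (hsm : ContDiff ℝ (⊤ : ℕ∞) h)
    (h0 : h 0 = 0) (h'0 : deriv h 0 = 1)
    (hpos : ∀ r ∈ Set.Ioc 0 R, 0 < h r)
    (hconc : ∀ r ∈ Set.Icc 0 R, deriv (deriv h) r ≤ 0)
    (hder : ∀ r ∈ Set.Icc 0 R, 0 < deriv h r ∧ deriv h r ≤ 1)
    (n m : ℕ) (hn : 2 ≤ n) (hm : 1 ≤ m)
    (z : ℝ → ℝ)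
    (hz : ∀ r ∈ Set.Ioc 0 R,
      HasDerivAt z
        (-(z r^2 + ((n : ℝ) - 2) * deriv h r * z r - (m : ℝ) * ((n : ℝ) - 2 + (m : ℝ))) / h r) r)
    (hz0 : Filter.Tendsto z (nhdsWithin 0 (Set.Ioi 0)) (nhds (m : ℝ))) :
    MonotoneOn z (Set.Ioc 0 R) ∧
      ∀ r ∈ Set.Ioc 0 R,
        z r^2 + ((n : ℝ) - 2) * deriv h r * z r - (m : ℝ) * ((n : ℝ) - 2 + (m : ℝ)) ≤ 0 := by
  have hn' : (2:ℝ) ≤ (n:ℝ) := by exact_mod_cast hn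
  have hm' : (1:ℝ) ≤ (m:ℝ) := by exact_mod_cast hm
  set τ : ℝ := (m : ℝ) * ((n : ℝ) - 2 + (m : ℝ)) with hτdef
  have hτpos : 0 < τ := by
    have : (0:ℝ) < (n:ℝ) - 2 + (m:ℝ) := by linarith
    positivity
  -- continuity / antitonicity of deriv h
  have hsm' : ContDiff ℝ (⊤ : ℕ∞) h := hsm.of_le (by simp)
  have hd1 : ContDiff ℝ (⊤ : ℕ∞) (deriv h) := (contDiff_infty_iff_deriv.mp hsm').2
  have hanti : AntitoneOn (deriv h) (Icc 0 R) := by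
    apply antitoneOn_of_deriv_nonpos (convex_Icc 0 R) hd1.continuous.continuousOn
      ((hd1.differentiable (by norm_num)).differentiableOn)
    intro x hx
    rw [interior_Icc] at hx
    exact hconc x ⟨hx.1.le, hx.2.le⟩
  -- Part A : z > 0 on (0, R]
  have hApos : ∀ r ∈ Ioc 0 R, 0 < z r := by
    by_contra hcon
    push_neg at hcon
    obtain ⟨r1, hr1, hz1⟩ := hcon
    have hev : ∀ᶠ r in nhdsWithin 0 (Ioi 0), 0 < z r :=
      hz0.eventually (eventually_gt_nhds (by linarith : (0:ℝ) < (m:ℝ)))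
    obtain ⟨u, hu, hsub⟩ := mem_nhdsGT_iff_exists_Ioo_subset.mp hev
    have hu0 : (0:ℝ) < u := hu
    have hur1 : u ≤ r1 := by
      by_contra hcc
      push_neg at hcc
      exact absurd (hsub ⟨hr1.1, hcc⟩) (not_lt.mpr hz1)
    set e : ℝ := u / 2 with he
    have hepos : 0 < e := by positivity
    have her1 : e ≤ r1 := by
      simp only [he]; linarith
    set T : Set ℝ := Icc e r1 ∩ z ⁻¹' (Iic 0) with hT
    have hmemIoc : ∀ x ∈ Icc e r1, x ∈ Ioc 0 R :=
      fun x hx => ⟨lt_of_lt_of_le hepos hx.1, hx.2.trans hr1.2⟩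
    have hzconT : ContinuousOn z (Icc e r1) :=
      fun x hx => (hz x (hmemIoc x hx)).continuousAt.continuousWithinAt
    have hTclosed : IsClosed T :=
      ContinuousOn.preimage_isClosed_of_isClosed hzconT isClosed_Icc isClosed_Iic
    have hTne : T.Nonempty := ⟨r1, ⟨her1, le_rfl⟩, hz1⟩
    have hTbdd : BddBelow T := ⟨e, fun x hx => hx.1.1⟩
    set a : ℝ := sInf T with ha
    have haT : a ∈ T := hTclosed.csInf_mem hTne hTbdd
    have haIoc : a ∈ Ioc 0 R := hmemIoc a haT.1
    have hleft : ∀ r ∈ Ioo 0 a, 0 < z r := by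
      intro r hr
      rcases lt_or_ge r u with hru | hru
      · exact hsub ⟨hr.1, hru⟩
      · by_contra hzr
        push_neg at hzr
        have hrT : r ∈ T := ⟨⟨by simp only [he]; linarith, hr.2.le.trans haT.1.2⟩, hzr⟩
        exact absurd (csInf_le hTbdd hrT) (not_le.mpr hr.2)
    have hza : z a = 0 := by
      refine le_antisymm haT.2 ?_
      have htends : Filter.Tendsto z (nhdsWithin a (Iio a)) (nhds (z a)) :=
        (hz a haIoc).continuousAt.continuousWithinAt
      refine ge_of_tendsto htends ?_
      filter_upwards [Ioo_mem_nhdsLT_of_mem (⟨haIoc.1, le_rfl⟩ : a ∈ Ioc 0 a)] with r hr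
      exact (hleft r hr).le
    have hd := hz a haIoc
    rw [show -(z a^2 + ((n : ℝ) - 2) * deriv h a * z a - τ) / h a = τ / h a by
      rw [hza]; ring] at hd
    have hdpos : 0 < τ / h a := div_pos hτpos (hpos a haIoc)
    have hslope := hasDerivAt_iff_tendsto_slope.mp hd
    have hslope' : Filter.Tendsto (slope z a) (nhdsWithin a (Iio a)) (nhds (τ / h a)) :=
      hslope.mono_left (nhdsWithin_mono a (fun x hx => ne_of_lt hx))
    have hev2 : ∀ᶠ r in nhdsWithin a (Iio a), 0 < slope z a r :=
      hslope'.eventually (eventually_gt_nhds hdpos)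
    have hev3 : ∀ᶠ r in nhdsWithin a (Iio a), r ∈ Ioo 0 a :=
      Ioo_mem_nhdsLT_of_mem (⟨haIoc.1, le_rfl⟩ : a ∈ Ioc 0 a)
    obtain ⟨r, hrs, hrm⟩ := (hev2.and hev3).exists
    rw [slope_def_field] at hrs
    have hzrneg : z r < 0 := by
      rcases (div_pos_iff).mp hrs with ⟨h1, h2⟩ | ⟨h1, h2⟩
      · exfalso; linarith [hrm.2]
      · linarith [hza, h1]
    exact absurd (hleft r hrm) (not_lt.mpr hzrneg.le)
  -- Part B : the Riccati quantity is nonpositive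
  have key : ∀ r ∈ Ioc 0 R,
      z r^2 + ((n : ℝ) - 2) * deriv h r * z r - τ ≤ 0 := by
    intro r0 hr0
    by_contra hQ
    push_neg at hQ
    have hz0pos : 0 < z r0 := hApos r0 hr0
    have hr0Icc : r0 ∈ Icc 0 R := ⟨hr0.1.le, hr0.2⟩
    set b : ℝ := ((n:ℝ) - 2) * deriv h r0 with hbdef
    have hb0 : 0 ≤ b := mul_nonneg (by linarith) (hder r0 hr0Icc).1.le
    have hb1 : b ≤ (n:ℝ) - 2 := by
      have := (hder r0 hr0Icc).2
      nlinarith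
    set s : ℝ := Real.sqrt (b^2 + 4*τ) with hsdef
    have hs2 : s^2 = b^2 + 4*τ := Real.sq_sqrt (by positivity)
    have hsnn : 0 ≤ s := Real.sqrt_nonneg _
    have hsb : b < s := by nlinarith
    set c : ℝ := (s - b)/2 with hcdef
    have hcpos : 0 < c := by simp only [hcdef]; linarith
    have hcroot : c^2 + b*c = τ := by
      have h1 : c^2 + b*c = (s^2 - b^2)/4 := by simp only [hcdef]; ring
      rw [h1, hs2]; ring
    have hcm : (m:ℝ) ≤ c := by
      by_contra hcc
      push_neg at hcc
      nlinarith
    have hczr0 : c < z r0 := by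
      by_contra hcc
      push_neg at hcc
      nlinarith
    -- derivative of z is negative wherever z > c on (0, r0]
    have hderneg : ∀ x ∈ Ioc 0 r0, c < z x → deriv z x < 0 := by
      intro x hx hcx
      have hxIoc : x ∈ Ioc 0 R := ⟨hx.1, hx.2.trans hr0.2⟩
      have hxIcc : x ∈ Icc 0 R := ⟨hx.1.le, hxIoc.2⟩
      have hh' : deriv h r0 ≤ deriv h x := hanti hxIcc hr0Icc hx.2
      have hzxpos : 0 < z x := lt_trans hcpos hcx
      have hQx : 0 < z x^2 + ((n:ℝ) - 2) * deriv h x * z x - τ := by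
        have h1 : ((n:ℝ) - 2) * deriv h r0 * z x ≤ ((n:ℝ) - 2) * deriv h x * z x := by
          have : 0 ≤ ((n:ℝ) - 2) * (deriv h x - deriv h r0) * z x := by
            apply mul_nonneg (mul_nonneg (by linarith) (by linarith)) hzxpos.le
          nlinarith
        nlinarith
      rw [(hz x hxIoc).deriv]
      apply div_neg_of_neg_of_pos _ (hpos x hxIoc)
      linarith
    -- z > c on all of (0, r0]
    have hgt : ∀ r ∈ Ioc 0 r0, c < z r := by
      by_contra hcc
      push_neg at hcc
      obtain ⟨r1, hr1, hle⟩ := hcc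
      set T : Set ℝ := Icc r1 r0 ∩ z ⁻¹' (Iic c) with hT
      have hmemIoc : ∀ x ∈ Icc r1 r0, x ∈ Ioc 0 R :=
        fun x hx => ⟨lt_of_lt_of_le hr1.1 hx.1, hx.2.trans hr0.2⟩
      have hzconT : ContinuousOn z (Icc r1 r0) :=
        fun x hx => (hz x (hmemIoc x hx)).continuousAt.continuousWithinAt
      have hTclosed : IsClosed T :=
        ContinuousOn.preimage_isClosed_of_isClosed hzconT isClosed_Icc isClosed_Iic
      have hTne : T.Nonempty := ⟨r1, ⟨le_rfl, hr1.2⟩, hle⟩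
      have hTbdd : BddAbove T := ⟨r0, fun x hx => hx.1.2⟩
      set a : ℝ := sSup T with ha
      have haT : a ∈ T := hTclosed.csSup_mem hTne hTbdd
      have haIoc : a ∈ Ioc 0 R := hmemIoc a haT.1
      have har0 : a < r0 := by
        rcases lt_or_eq_of_le haT.1.2 with hlt | heq
        · exact hlt
        · exfalso; have := haT.2; rw [heq] at this; exact absurd hczr0 (not_lt.mpr this)
      have hgt' : ∀ x ∈ Ioc a r0, c < z x := by
        intro x hx
        by_contra hzx
        push_neg at hzx
        have hxT : x ∈ T := ⟨⟨haT.1.1.trans hx.1.le, hx.2⟩, hzx⟩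
        exact absurd (le_csSup hTbdd hxT) (not_le.mpr hx.1)
      have hzanti : StrictAntiOn z (Icc a r0) := by
        apply strictAntiOn_of_deriv_neg (convex_Icc a r0)
        · intro x hx
          exact (hz x ⟨lt_of_lt_of_le haIoc.1 hx.1, hx.2.trans hr0.2⟩).continuousAt.continuousWithinAt
        · intro x hx
          rw [interior_Icc] at hx
          exact hderneg x ⟨lt_trans haIoc.1 hx.1, hx.2.le⟩ (hgt' x ⟨hx.1, hx.2.le⟩)
      have : z r0 < z a := hzanti ⟨le_rfl, har0.le⟩ ⟨har0.le, le_rfl⟩ har0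
      have hzac : z a ≤ c := haT.2
      linarith
    -- z is strictly antitone on (0, r0], contradicting the limit at 0
    have hsa : StrictAntiOn z (Ioc 0 r0) := by
      apply strictAntiOn_of_deriv_neg (convex_Ioc 0 r0)
      · intro x hx
        exact (hz x ⟨hx.1, hx.2.trans hr0.2⟩).continuousAt.continuousWithinAt
      · intro x hx
        rw [interior_Ioc] at hx
        exact hderneg x ⟨hx.1, hx.2.le⟩ (hgt x ⟨hx.1, hx.2.le⟩)
    have hev : ∀ᶠ r in nhdsWithin 0 (Ioi 0), z r0 ≤ z r := by
      filter_upwards [Ioo_mem_nhdsGT_of_mem (⟨le_rfl, hr0.1⟩ : (0:ℝ) ∈ Ico 0 r0)] with r hr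
      exact (hsa ⟨hr.1, hr.2.le⟩ ⟨hr0.1, le_rfl⟩ hr.2).le
    have hlim : z r0 ≤ (m:ℝ) := ge_of_tendsto hz0 hev
    linarith
  refine ⟨?_, key⟩
  apply monotoneOn_of_deriv_nonneg (convex_Ioc 0 R)
  · intro x hx
    exact (hz x hx).continuousAt.continuousWithinAt
  · intro x hx
    rw [interior_Ioc] at hx
    exact ((hz x ⟨hx.1, hx.2.le⟩).differentiableAt).differentiableWithinAt
  · intro x hx
    rw [interior_Ioc] at hx
    have hxIoc : x ∈ Ioc 0 R := ⟨hx.1, hx.2.le⟩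
    rw [(hz x hxIoc).deriv]
    apply div_nonneg _ (hpos x hxIoc).le
    linarith [key x hxIoc]
end

section
/- Let n ≥ 2 and let h : [0, R] → ℝ be smooth with h(0) = 0, h'(0) = 1, h > 0 on (0, R], h'' ≤ 0 and 0 < h' ≤ 1 on [0, R]. Define η_0 = h(R)^{n−1} / ∫₀^R h(r)^{n−1} dr. Then n · h'(R)/h(R) ≤ η_0 ≤ n/h(R), and equality in either inequality forces h(r) = r on [0, R]. -/
open Real Set ContDiff

private lemma eq_zero_of_integral_zero {R : ℝ} (hR : 0 < R) {f : ℝ → ℝ}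
    (hf : ContinuousOn f (Icc 0 R)) (hnn : ∀ r ∈ Icc 0 R, 0 ≤ f r)
    (hi : (∫ r in (0:ℝ)..R, f r) = 0) : ∀ r ∈ Icc 0 R, f r = 0 := by
  intro r hr
  by_contra hne
  have hposr : 0 < f r := lt_of_le_of_ne (hnn r hr) (Ne.symm hne)
  have hlt := intervalIntegral.integral_lt_integral_of_continuousOn_of_le_of_exists_lt hR
    continuousOn_const hf (fun x hx => hnn x ⟨hx.1.le, hx.2⟩) ⟨r, hr, by simpa using hposr⟩
  simp only [intervalIntegral.integral_const, smul_zero, hi] at hlt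
  exact lt_irrefl 0 hlt

theorem eta_zero_two_sided (R : ℝ) (hR : 0 < R) (n : ℕ) (hn : 2 ≤ n)
    (h : ℝ → ℝ) (hsm : ContDiff ℝ (⊤ : ℕ∞) h) (h0 : h 0 = 0) (h'0 : deriv h 0 = 1)
    (hpos : ∀ r ∈ Set.Ioc 0 R, 0 < h r)
    (hconc : ∀ r ∈ Set.Icc 0 R, deriv (deriv h) r ≤ 0)
    (hder : ∀ r ∈ Set.Icc 0 R, 0 < deriv h r ∧ deriv h r ≤ 1) :
    ((n : ℝ) * deriv h R / h R ≤ h R^(n-1) / (∫ r in (0:ℝ)..R, h r^(n-1))) ∧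
    (h R^(n-1) / (∫ r in (0:ℝ)..R, h r^(n-1)) ≤ (n : ℝ) / h R) ∧
    ((n : ℝ) * deriv h R / h R = h R^(n-1) / (∫ r in (0:ℝ)..R, h r^(n-1)) →
      ∀ r ∈ Set.Icc 0 R, h r = r) ∧
    (h R^(n-1) / (∫ r in (0:ℝ)..R, h r^(n-1)) = (n : ℝ) / h R →
      ∀ r ∈ Set.Icc 0 R, h r = r) := by
  have hdiff : Differentiable ℝ h := hsm.differentiable (by simp)
  have hcont : Continuous h := hdiff.continuous
  have hsmi : ContDiff ℝ ∞ h := hsm.of_le (by simp)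
  have hsm' : ContDiff ℝ ∞ (deriv h) := (contDiff_infty_iff_deriv.mp hsmi).2
  have hd'cont : Continuous (deriv h) := hsm'.continuous
  have hd'diff : Differentiable ℝ (deriv h) :=
    hsm'.differentiable (by simp)
  have hRpos : 0 < h R := hpos R ⟨hR, le_refl R⟩
  set m := n - 1 with hm
  have hnm : n = m + 1 := by omega
  have hnpos : (0:ℝ) < n := by positivity
  have hnn : ∀ x ∈ Icc (0:ℝ) R, 0 ≤ h x := by
    intro x hx
    rcases eq_or_lt_of_le hx.1 with h1 | h1
    · simp [← h1, h0]
    · exact (hpos x ⟨h1, hx.2⟩).le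
  set I := ∫ r in (0:ℝ)..R, h r ^ m with hI
  have hIpos : 0 < I :=
    intervalIntegral.intervalIntegral_pos_of_pos_on ((hcont.pow m).intervalIntegrable 0 R)
      (fun x hx => pow_pos (hpos x ⟨hx.1, hx.2.le⟩) m) hR
  have hint1 : IntervalIntegrable (fun r => (n:ℝ) * h r ^ m * deriv h r) MeasureTheory.volume 0 R :=
    ((continuous_const.mul (hcont.pow m)).mul hd'cont).intervalIntegrable 0 R
  have hint2 : IntervalIntegrable (fun r => (n:ℝ) * h r ^ m) MeasureTheory.volume 0 R :=
    (continuous_const.mul (hcont.pow m)).intervalIntegrable 0 R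
  have hint3 : IntervalIntegrable (fun r => (n:ℝ) * deriv h R * h r ^ m)
      MeasureTheory.volume 0 R :=
    (continuous_const.mul (hcont.pow m)).intervalIntegrable 0 R
  -- FTC: ∫ n h^m h' = h R ^ n
  have hFTC : (∫ r in (0:ℝ)..R, (n:ℝ) * h r ^ m * deriv h r) = h R ^ n := by
    have := intervalIntegral.integral_eq_sub_of_hasDerivAt
      (f := fun r => h r ^ n) (f' := fun r => (n:ℝ) * h r ^ m * deriv h r)
      (fun x _ => (hdiff x).hasDerivAt.pow n) hint1
    rw [this]
    simp [h0, zero_pow (show n ≠ 0 by omega)]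
  have hnI : (∫ r in (0:ℝ)..R, (n:ℝ) * h r ^ m) = n * I := by
    rw [hI, ← intervalIntegral.integral_const_mul]
  have hdI : (∫ r in (0:ℝ)..R, (n:ℝ) * deriv h R * h r ^ m) = n * deriv h R * I := by
    rw [hI, ← intervalIntegral.integral_const_mul]
  -- antitone derivative
  have hanti : AntitoneOn (deriv h) (Icc 0 R) := by
    apply antitoneOn_of_deriv_nonpos (convex_Icc 0 R) hd'cont.continuousOn
      hd'diff.differentiableOn
    intro x hx
    rw [interior_Icc] at hx
    exact hconc x ⟨hx.1.le, hx.2.le⟩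
  have hpow : h R ^ n = h R ^ m * h R := by rw [hnm, pow_succ]
  -- upper bound: h R ^ n ≤ n I
  have hup : h R ^ n ≤ (n:ℝ) * I := by
    rw [← hFTC, ← hnI]
    apply intervalIntegral.integral_mono_on hR.le hint1 hint2
    intro x hx
    nlinarith [mul_nonneg (mul_nonneg hnpos.le (pow_nonneg (hnn x hx) m))
      (sub_nonneg.mpr (hder x hx).2)]
  -- lower bound: n h'(R) I ≤ h R ^ n
  have hlo : (n:ℝ) * deriv h R * I ≤ h R ^ n := by
    rw [← hFTC, ← hdI]
    apply intervalIntegral.integral_mono_on hR.le hint3 hint1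
    intro x hx
    have hax : deriv h R ≤ deriv h x := hanti hx (right_mem_Icc.mpr hR.le) hx.2
    nlinarith [mul_nonneg (mul_nonneg hnpos.le (pow_nonneg (hnn x hx) m))
      (sub_nonneg.mpr hax)]
  have hup' : h R ^ m / I ≤ (n:ℝ) / h R := by
    rw [div_le_div_iff₀ hIpos hRpos]
    linarith [hup, hpow]
  have hlo' : (n:ℝ) * deriv h R / h R ≤ h R ^ m / I := by
    rw [div_le_div_iff₀ hRpos hIpos]
    linarith [hlo, hpow]
  -- helper: deriv h = 1 on Icc implies h = id
  have hid : (∀ s ∈ Icc (0:ℝ) R, deriv h s = 1) → ∀ r ∈ Icc (0:ℝ) R, h r = r := by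
    intro hd1 r hr
    have hftc : (∫ s in (0:ℝ)..r, deriv h s) = h r - h 0 :=
      intervalIntegral.integral_eq_sub_of_hasDerivAt
        (fun x _ => (hdiff x).hasDerivAt) (hd'cont.intervalIntegrable 0 r)
    have hcongr : (∫ s in (0:ℝ)..r, deriv h s) = ∫ s in (0:ℝ)..r, (1:ℝ) := by
      apply intervalIntegral.integral_congr
      intro x hx
      rw [uIcc_of_le hr.1] at hx
      exact hd1 x ⟨hx.1, hx.2.trans hr.2⟩
    rw [hcongr, integral_one, h0, sub_zero] at hftc
    linarith [hftc]
  refine ⟨hlo', hup', ?_, ?_⟩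
  · -- lower equality
    intro heq
    rw [div_eq_div_iff hRpos.ne' hIpos.ne'] at heq
    have heq' : (n:ℝ) * deriv h R * I = h R ^ n := by linarith [hpow]
    have hzero : ∀ x ∈ Icc (0:ℝ) R,
        (n:ℝ) * h x ^ m * deriv h x - (n:ℝ) * deriv h R * h x ^ m = 0 := by
      apply eq_zero_of_integral_zero hR
      · exact (((continuous_const.mul (hcont.pow m)).mul hd'cont).sub
          (continuous_const.mul (hcont.pow m))).continuousOn
      · intro x hx
        have hax : deriv h R ≤ deriv h x := hanti hx (right_mem_Icc.mpr hR.le) hx.2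
        nlinarith [mul_nonneg (mul_nonneg hnpos.le (pow_nonneg (hnn x hx) m))
          (sub_nonneg.mpr hax)]
      · rw [intervalIntegral.integral_sub hint1 hint3, hFTC, hdI, heq', sub_self]
    have key : ∀ x ∈ Ioc (0:ℝ) R, deriv h x = deriv h R := by
      intro x hx
      have hz := hzero x ⟨hx.1.le, hx.2⟩
      have hpx : (0:ℝ) < (n:ℝ) * h x ^ m := by
        have := pow_pos (hpos x hx) m; positivity
      have h2 : ((n:ℝ) * h x ^ m) * (deriv h x - deriv h R) = 0 := by linear_combination hz
      rcases mul_eq_zero.mp h2 with h3 | h3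
      · exact absurd h3 hpx.ne'
      · linarith [sub_eq_zero.mp h3]
    have hdR : deriv h R = 1 := by
      have h1 : Filter.Tendsto (deriv h) (nhdsWithin 0 (Ioi 0)) (nhds (deriv h 0)) :=
        (hd'cont.tendsto 0).mono_left nhdsWithin_le_nhds
      have h2 : Filter.Tendsto (deriv h) (nhdsWithin 0 (Ioi 0)) (nhds (deriv h R)) := by
        apply Filter.Tendsto.congr' _ tendsto_const_nhds
        filter_upwards [Ioo_mem_nhdsGT_of_mem (by simp [hR] : (0:ℝ) ∈ Ico 0 R)] with x hx
        exact (key x ⟨hx.1, hx.2.le⟩).symm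
      rw [← tendsto_nhds_unique h1 h2, h'0]
    apply hid
    intro s hs
    rcases eq_or_lt_of_le hs.1 with h1 | h1
    · rw [← h1]; exact h'0
    · rw [key s ⟨h1, hs.2⟩, hdR]
  · -- upper equality
    intro heq
    rw [div_eq_div_iff hIpos.ne' hRpos.ne'] at heq
    have heq' : h R ^ n = (n:ℝ) * I := by linarith [hpow]
    have hzero : ∀ x ∈ Icc (0:ℝ) R,
        (n:ℝ) * h x ^ m - (n:ℝ) * h x ^ m * deriv h x = 0 := by
      apply eq_zero_of_integral_zero hR
      · exact ((continuous_const.mul (hcont.pow m)).sub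
          ((continuous_const.mul (hcont.pow m)).mul hd'cont)).continuousOn
      · intro x hx
        nlinarith [mul_nonneg (mul_nonneg hnpos.le (pow_nonneg (hnn x hx) m))
          (sub_nonneg.mpr (hder x hx).2)]
      · rw [intervalIntegral.integral_sub hint2 hint1, hFTC, hnI, heq', sub_self]
    apply hid
    intro s hs
    rcases eq_or_lt_of_le hs.1 with h1 | h1
    · rw [← h1]; exact h'0
    · have hz := hzero s hs
      have hps : (0:ℝ) < (n:ℝ) * h s ^ m := by
        have := pow_pos (hpos s ⟨h1, hs.2⟩) m; positivity
      have h2 : ((n:ℝ) * h s ^ m) * (1 - deriv h s) = 0 := by linear_combination hz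
      rcases mul_eq_zero.mp h2 with h3 | h3
      · exact absurd h3 hps.ne'
      · linarith [sub_eq_zero.mp h3]
end
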